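/- arXiv:2202.10283 — 8 statements merged into one kernel-verified Lean document; each statement's English description precedes it below -/
import Mathlib

section
/- Let G be a topological group acting continuously and freely on a topological space M, and let H be a closed normal subgroup of G. Then the action of G on M is proper if and only if the action of H on M is proper and the induced action of the quotient group G/H on the orbit space M/H is proper. -/
/-!
Both directions are ultrafilter arguments. If `G` acts properly, an ultrafilter on
`(G ⧸ H) × (M ⧸ H)` along which `(⟦g⟧, ⟦m⟧) ↦ (⟦g • m⟧, ⟦m⟧)` converges can be lifted, since
`M → M ⧸ H` is open and `H` is normal, to an ultrafilter on `G × M` along which `(g • m, m)`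
converges; the limit provided by properness upstairs then projects to one downstairs.
Conversely, if `(g • m, m)` converges along an ultrafilter, properness downstairs makes `g`
converge modulo `H`, say to `g₀ H`; writing `g = u * h` with `u → g₀` and `h ∈ H`, properness
of the `H`-action makes `h` converge, hence `g` converges.
-/

open Filter Topology

theorem Ultrafilter.exists_map_eq_and_tendsto {α β γ : Type*} {f : α → β} {g : α → γ}
    {𝒰 : Ultrafilter β} {l : Filter γ} (h : ∀ s ∈ 𝒰, ∀ t ∈ l, ∃ a, f a ∈ s ∧ g a ∈ t) :
    ∃ 𝒱 : Ultrafilter α, 𝒱.map f = 𝒰 ∧ Tendsto g 𝒱 l := by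
  have : (Filter.comap f 𝒰 ⊓ Filter.comap g l).NeBot := by
    refine Filter.inf_neBot_iff.mpr fun s' hs' t' ht' => ?_
    obtain ⟨s, hs, hss'⟩ := Filter.mem_comap.mp hs'
    obtain ⟨t, ht, htt'⟩ := Filter.mem_comap.mp ht'
    obtain ⟨a, has, hat⟩ := h s hs t ht
    exact ⟨a, hss' has, htt' hat⟩
  refine ⟨.of (Filter.comap f 𝒰 ⊓ Filter.comap g l), ?_, ?_⟩
  · exact Ultrafilter.eq_of_le (map_le_iff_le_comap.mpr ((Ultrafilter.of_le _).trans inf_le_left))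
  · exact tendsto_iff_comap.mpr ((Ultrafilter.of_le _).trans inf_le_right)

theorem IsProperMap.of_comp_eq_of_isOpenMap {X Y Z W : Type*} [TopologicalSpace X]
    [TopologicalSpace Y] [TopologicalSpace Z] [TopologicalSpace W]
    {Φ : X → Z} {p : X → Y} {q : Z → W} {Ψ : Y → W} (hΦ : IsProperMap Φ) (hp : Continuous p)
    (hq : IsOpenMap q) (hq_surj : Function.Surjective q) (hΨ : Continuous Ψ)
    (hcomm : ∀ x, Ψ (p x) = q (Φ x)) (hlift : ∀ y z, Ψ y = q z → ∃ x, p x = y ∧ Φ x = z) :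
    IsProperMap Ψ := by
  refine isProperMap_iff_ultrafilter.mpr ⟨hΨ, fun 𝒰 w hw => ?_⟩
  obtain ⟨z, rfl⟩ := hq_surj w
  obtain ⟨𝒱, hmap, hΦz⟩ := Ultrafilter.exists_map_eq_and_tendsto (f := p) (g := Φ) (𝒰 := 𝒰)
    (l := 𝓝 z) fun s hs t ht => by
      obtain ⟨y, hys, z', hz't, hyz'⟩ :=
        Ultrafilter.nonempty_of_mem (inter_mem hs (hw (hq.image_mem_nhds ht)))
      obtain ⟨x, rfl, rfl⟩ := hlift y z' hyz'.symm
      exact ⟨x, hys, hz't⟩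
  obtain ⟨x, rfl, hx⟩ := hΦ.ultrafilter_le_nhds_of_tendsto hΦz
  refine ⟨p x, hcomm x, ?_⟩
  rw [← hmap]
  exact (hp.tendsto x).mono_left (map_mono hx)

section

variable {G M : Type*} [Group G] [TopologicalSpace G] [IsTopologicalGroup G]
  [TopologicalSpace M] [MulAction G M] [ContinuousSMul G M]

theorem exists_smul_eq_and_le_nhds_of_tendsto_mk (H : Subgroup G)
    (hH : IsProperMap fun hm : H × M => (hm.1 • hm.2, hm.2)) {𝒱 : Ultrafilter (G × M)}
    {m₁ m₂ : M} {g₀ : G} (hΦ : Tendsto (fun gm : G × M => (gm.1 • gm.2, gm.2)) 𝒱 (𝓝 (m₁, m₂)))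
    (hg₀ : Tendsto (fun gm : G × M => (gm.1 : G ⧸ H)) 𝒱 (𝓝 g₀)) :
    ∃ g : G, g • m₂ = m₁ ∧ ↑𝒱 ≤ 𝓝 (g, m₂) := by
  obtain ⟨𝒵, rfl, hu⟩ := Ultrafilter.exists_map_eq_and_tendsto
    (f := fun x : G × H × M => (x.1 * x.2.1, x.2.2)) (g := Prod.fst) (l := 𝓝 g₀)
    fun s hs t ht => by
      have hmk : QuotientGroup.mk '' t ∈ 𝓝 (g₀ : G ⧸ H) :=
        QuotientGroup.isOpenQuotientMap_mk.isOpenMap.image_mem_nhds ht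
      obtain ⟨⟨g, m⟩, hgm, u, hut, hug⟩ := Ultrafilter.nonempty_of_mem (inter_mem hs (hg₀ hmk))
      exact ⟨(u, ⟨u⁻¹ * g, QuotientGroup.eq.mp hug⟩, m), by simpa using hgm, hut⟩
  rw [Ultrafilter.coe_map, tendsto_map'_iff] at hΦ
  have hH𝒵 : Tendsto (fun x : G × H × M => (x.2.1 • x.2.2, x.2.2)) 𝒵 (𝓝 (g₀⁻¹ • m₁, m₂)) := by
    have hsmul := hu.inv.smul hΦ.fst_nhds
    refine (hsmul.congr fun x => ?_).prodMk_nhds hΦ.snd_nhds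
    simp [mul_smul, Subgroup.smul_def]
  rw [← Function.comp_def (fun hm : H × M => (hm.1 • hm.2, hm.2)) Prod.snd,
    ← tendsto_map'_iff, ← Ultrafilter.coe_map] at hH𝒵
  obtain ⟨⟨h₀, m₀⟩, hfib, hle⟩ := hH.ultrafilter_le_nhds_of_tendsto hH𝒵
  obtain ⟨hh₀, rfl⟩ := Prod.mk.inj hfib
  refine ⟨g₀ * h₀, ?_, ?_⟩
  · rw [mul_smul]
    exact (congrArg (g₀ • ·) hh₀).trans (smul_inv_smul g₀ m₁)
  have h𝒵 : ↑𝒵 ≤ 𝓝 (g₀, h₀, m₀) := by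
    rw [nhds_prod_eq, le_prod]
    exact ⟨hu, hle⟩
  exact (map_mono h𝒵).trans (Continuous.tendsto (by fun_prop) _)

variable (H : Subgroup G)
  {σ : G ⧸ H → Quotient (MulAction.orbitRel H M) → Quotient (MulAction.orbitRel H M)}

theorem isProperMap_quotient_smul_pair [H.Normal]
    (hσ : ∀ (g : G) (m : M), σ (g : G ⧸ H) (Quotient.mk _ m) = Quotient.mk _ (g • m))
    (hG : IsProperMap fun gm : G × M => (gm.1 • gm.2, gm.2)) :
    IsProperMap fun p : (G ⧸ H) × Quotient (MulAction.orbitRel H M) => (σ p.1 p.2, p.2) := by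
  have hπ : IsOpenQuotientMap (Quotient.mk (MulAction.orbitRel H M)) :=
    MulAction.isOpenQuotientMap_quotientMk
  have hp := QuotientGroup.isOpenQuotientMap_mk (N := H).prodMap hπ
  have hq := hπ.prodMap hπ
  have hcomm : ∀ gm : G × M, (σ gm.1 (Quotient.mk _ gm.2), Quotient.mk _ gm.2) =
      (Quotient.mk (MulAction.orbitRel H M) (gm.1 • gm.2),
        Quotient.mk (MulAction.orbitRel H M) gm.2) :=
    fun gm => Prod.ext (hσ gm.1 gm.2) rfl
  refine hG.of_comp_eq_of_isOpenMap hp.continuous hq.isOpenMap hq.surjective ?_ hcomm ?_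
  · rw [hp.isQuotientMap.continuous_iff]
    exact hq.continuous.comp hG.continuous |>.congr fun gm => (hcomm gm).symm
  · rintro ⟨gq, y⟩ ⟨a, b⟩ hab
    obtain ⟨g, rfl⟩ := QuotientGroup.mk_surjective gq
    obtain ⟨m, rfl⟩ := Quotient.exists_rep y
    obtain ⟨hga, hmb⟩ := Prod.mk.inj ((hcomm (g, m)).symm.trans hab)
    obtain ⟨h₁, rfl⟩ := Quotient.eq.mp hga.symm
    obtain ⟨h₂, rfl⟩ := Quotient.eq.mp hmb.symm
    refine ⟨(h₁ * g * (h₂ : G)⁻¹, h₂ • m), Prod.ext ?_ ?_, ?_⟩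
    · simp [QuotientGroup.mk_mul, (QuotientGroup.eq_one_iff _).mpr h₁.2]
    · exact Quotient.sound ⟨h₂, rfl⟩
    · simp [Subgroup.smul_def, mul_smul]

theorem isProperMap_smul_pair_of_quotient
    (hσ : ∀ (g : G) (m : M), σ (g : G ⧸ H) (Quotient.mk _ m) = Quotient.mk _ (g • m))
    (hH : IsProperMap fun hm : H × M => (hm.1 • hm.2, hm.2))
    (hQ : IsProperMap fun p : (G ⧸ H) × Quotient (MulAction.orbitRel H M) => (σ p.1 p.2, p.2)) :
    IsProperMap fun gm : G × M => (gm.1 • gm.2, gm.2) := by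
  refine isProperMap_iff_ultrafilter.mpr ⟨by fun_prop, fun 𝒱 ⟨m₁, m₂⟩ hΦ => ?_⟩
  have hπ : Continuous (Quotient.mk (MulAction.orbitRel H M)) := continuous_quotient_mk'
  have hΨ : Tendsto (fun p : (G ⧸ H) × Quotient (MulAction.orbitRel H M) => (σ p.1 p.2, p.2))
      ↑(𝒱.map (Prod.map (QuotientGroup.mk : G → G ⧸ H) (Quotient.mk (MulAction.orbitRel H M))))
      (𝓝 (Quotient.mk _ m₁, Quotient.mk _ m₂)) := by
    rw [Ultrafilter.coe_map, tendsto_map'_iff]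
    refine ((hπ.prodMap hπ).tendsto (m₁, m₂) |>.comp hΦ).congr fun gm => ?_
    exact Prod.ext (hσ gm.1 gm.2).symm rfl
  obtain ⟨⟨gq, y⟩, -, hle⟩ := hQ.ultrafilter_le_nhds_of_tendsto hΨ
  obtain ⟨g₀, rfl⟩ := QuotientGroup.mk_surjective gq
  have hg₀ : Tendsto (fun gm : G × M => (gm.1 : G ⧸ H)) 𝒱 (𝓝 g₀) :=
    (tendsto_map'_iff.mp hle).fst_nhds
  obtain ⟨g, hgm, hg⟩ := exists_smul_eq_and_le_nhds_of_tendsto_mk H hH hΦ hg₀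
  exact ⟨(g, m₂), congrArg (·, m₂) hgm, hg⟩

end

theorem statement0_general {G M : Type*} [Group G] [TopologicalSpace G] [IsTopologicalGroup G]
    [TopologicalSpace M] [MulAction G M] [ContinuousSMul G M]
    (H : Subgroup G) [H.Normal] (hHclosed : IsClosed (H : Set G))
    (σ : G ⧸ H → Quotient (MulAction.orbitRel H M) → Quotient (MulAction.orbitRel H M))
    (hσ : ∀ (g : G) (m : M),
      σ ((g : G ⧸ H)) (Quotient.mk (MulAction.orbitRel H M) m)
        = Quotient.mk (MulAction.orbitRel H M) (g • m)) :
    IsProperMap (fun gm : G × M => (gm.1 • gm.2, gm.2)) ↔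
      IsProperMap (fun hm : H × M => (hm.1 • hm.2, hm.2)) ∧
        IsProperMap (fun p : (G ⧸ H) × Quotient (MulAction.orbitRel H M) =>
          (σ p.1 p.2, p.2)) := by
  refine ⟨fun hG => ⟨?_, isProperMap_quotient_smul_pair H hσ hG⟩,
    fun ⟨hH, hQ⟩ => isProperMap_smul_pair_of_quotient H hσ hH hQ⟩
  have : ProperSMul G M := ⟨hG⟩
  have : IsClosed (H : Set G) := hHclosed
  exact ProperSMul.isProperMap_smul_pair

/-- Let `G` be a topological group acting continuously and freely on a
topological space `M`, and let `H` be a closed normal subgroup of `G`. Then the action of `G`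
on `M` is proper if and only if the action of `H` on `M` is proper and the induced action of
the quotient group `G ⧸ H` on the orbit space `M / H` is proper.

Here an action is proper when the map `(g, m) ↦ (g • m, m)` is a proper map, the orbit space
`M / H` is `Quotient (MulAction.orbitRel H M)` with the quotient topology, and the induced
action of `G ⧸ H` on `M / H` is encoded by the map `σ` satisfying `σ ⟦g⟧ ⟦m⟧ = ⟦g • m⟧`. -/
theorem statement0 {G M : Type*} [Group G] [TopologicalSpace G] [IsTopologicalGroup G]
    [TopologicalSpace M] [MulAction G M] [ContinuousSMul G M]
    (hfree : ∀ (g : G) (m : M), g • m = m → g = 1)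
    (H : Subgroup G) [H.Normal] (hHclosed : IsClosed (H : Set G))
    (σ : G ⧸ H → Quotient (MulAction.orbitRel H M) → Quotient (MulAction.orbitRel H M))
    (hσ : ∀ (g : G) (m : M),
      σ ((g : G ⧸ H)) (Quotient.mk (MulAction.orbitRel H M) m)
        = Quotient.mk (MulAction.orbitRel H M) (g • m)) :
    IsProperMap (fun gm : G × M => (gm.1 • gm.2, gm.2)) ↔
      IsProperMap (fun hm : H × M => (hm.1 • hm.2, hm.2)) ∧
        IsProperMap (fun p : (G ⧸ H) × Quotient (MulAction.orbitRel H M) =>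
          (σ p.1 p.2, p.2)) :=
  statement0_general H hHclosed σ hσ
end

section
/- Let n ≥ 1 and let g, j, and the subalgebra 𝔫 be the normal j-algebra data of the n-dimensional unit ball described in the context. Then every Lie subalgebra 𝔫' of 𝔫 with 𝔫' ∩ j(𝔫') = {0} is contained in a Lie subalgebra 𝔫̂' of 𝔫 with 𝔫̂' ∩ j(𝔫̂') = {0} and dim_ℝ 𝔫̂' = n. Moreover, if 𝔫' is abelian, then 𝔫̂' can be chosen to be abelian. -/
/-!
The nilradical is a Heisenberg algebra `𝔫 = V ⊕ ℝζ` with `V = span {ξₖ, ξ'ₖ}`: brackets in `𝔫`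
are `⁅x, y⁆ = ω(x, y) ζ` for an alternating form `ω`, and `ω(x, j x) = 0` only for `x = 0` in `V`.

Cutting `𝔫' + ℝζ` down to `V` gives a totally real `W ⊆ V`: if `ζ ∈ 𝔫'` then `W ⊆ 𝔫'`, and
otherwise `𝔫'` is abelian, so `W` is `ω`-isotropic, and isotropic subspaces of `V` are totally
real. While `2 dim L < dim V`, a totally real `L ⊆ V` can be enlarged by a nonzero `v ∈ V` that is
`ω`-orthogonal to `L + jL`; `L + ℝv` is again totally real, and isotropic if `L` was. Once
`dim L = n - 1`, the subalgebra `L ⊕ ℝζ` has dimension `n`, is totally real because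
`jζ = α ∉ 𝔫`, and is abelian when `L` is isotropic.
-/

open Module Submodule

def IsTotallyReal {R E : Type*} [Semiring R] [AddCommMonoid E] [Module R E] (J : E →ₗ[R] E)
    (L : Submodule R E) : Prop :=
  L ⊓ L.map J = ⊥

def IsIsotropic {R M N : Type*} [CommSemiring R] [AddCommMonoid M] [Module R M] [AddCommMonoid N]
    [Module R N] (B : M →ₗ[R] M →ₗ[R] N) (L : Submodule R M) : Prop :=
  ∀ x ∈ L, ∀ y ∈ L, B x y = 0

section Isotropic

variable {R M N : Type*} [CommRing R] [AddCommGroup M] [Module R M] [AddCommGroup N] [Module R N]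
  {B : M →ₗ[R] M →ₗ[R] N} {L L' : Submodule R M}

theorem IsIsotropic.mono (hL : IsIsotropic B L) (h : L' ≤ L) : IsIsotropic B L' :=
  fun x hx y hy => hL x (h hx) y (h hy)

theorem IsIsotropic.sup_span_singleton (hL : IsIsotropic B L) {v : M}
    (hv : ∀ x ∈ L, B v x = 0 ∧ B x v = 0) (hvv : B v v = 0) : IsIsotropic B (L ⊔ R ∙ v) := by
  intro x hx y hy
  obtain ⟨l, hl, _, hsz, rfl⟩ := mem_sup.mp hx
  obtain ⟨s, rfl⟩ := mem_span_singleton.mp hsz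
  obtain ⟨l', hl', _, htz, rfl⟩ := mem_sup.mp hy
  obtain ⟨t, rfl⟩ := mem_span_singleton.mp htz
  simp [hL l hl l' hl', (hv l hl).2, (hv l' hl').1, hvv]

end Isotropic

section TotallyReal

variable {K E : Type*} [Field K] [AddCommGroup E] [Module K E] {J : E →ₗ[K] E}
  {V L L' : Submodule K E}

theorem IsTotallyReal.mono (hL : IsTotallyReal J L) (h : L' ≤ L) : IsTotallyReal J L' :=
  eq_bot_iff.mpr <| hL ▸ inf_le_inf h (map_mono h)

theorem IsTotallyReal.sup_span_singleton_of_notMem (hL : IsTotallyReal J L) (hLV : L ≤ V)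
    (hJV : V.map J ≤ V) {z : E} (hz : z ∉ V) (hJz : J z ∉ V ⊔ K ∙ z) :
    IsTotallyReal J (L ⊔ K ∙ z) := by
  rw [IsTotallyReal, eq_bot_iff]
  rintro _ ⟨hx, y, hy, rfl⟩
  obtain ⟨l, hl, _, hsz, hls⟩ := mem_sup.mp hx
  obtain ⟨s, rfl⟩ := mem_span_singleton.mp hsz
  obtain ⟨l', hl', _, htz, rfl⟩ := mem_sup.mp hy
  obtain ⟨t, rfl⟩ := mem_span_singleton.mp htz
  have hJl' : J l' ∈ V := hJV (mem_map_of_mem (hLV hl'))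
  obtain rfl : t = 0 := by
    by_contra ht
    refine hJz ((smul_mem_iff _ ht).mp ?_)
    have : t • J z = l + s • z - J l' := by rw [hls, map_add, map_smul]; abel
    rw [this]
    exact sub_mem (add_mem (mem_sup_left (hLV hl)) (mem_sup_right (smul_mem _ _
      (mem_span_singleton_self z)))) (mem_sup_left hJl')
  rw [zero_smul, add_zero] at hls ⊢
  obtain rfl : s = 0 := by
    by_contra hs
    refine hz ((smul_mem_iff _ hs).mp ?_)
    rw [show s • z = J l' - l by rw [← hls]; abel]
    exact sub_mem hJl' (hLV hl)
  rw [zero_smul, add_zero] at hls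
  have : J l' ∈ L ⊓ L.map J := ⟨hls ▸ hl, mem_map_of_mem hl'⟩
  rwa [hL] at this

variable {ω : E →ₗ[K] E →ₗ[K] K}

theorem IsIsotropic.isTotallyReal (hL : IsIsotropic ω L) (hLV : L ≤ V)
    (hωV : ∀ x ∈ V, ω x (J x) = 0 → x = 0) : IsTotallyReal J L := by
  rw [IsTotallyReal, eq_bot_iff]
  rintro _ ⟨hx, y, hy, rfl⟩
  rw [hωV y (hLV hy) (hL y hy _ hx), map_zero]
  exact zero_mem _

theorem IsTotallyReal.sup_span_singleton (hL : IsTotallyReal J L) (hJ : ∀ x, J (J x) = -x)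
    (hω : ω.IsAlt) {v : E} (hv : ∀ x ∈ L, ω v x = 0 ∧ ω v (J x) = 0) (hvv : ω v (J v) ≠ 0) :
    IsTotallyReal J (L ⊔ K ∙ v) := by
  rw [IsTotallyReal, eq_bot_iff]
  rintro _ ⟨hx, y, hy, rfl⟩
  obtain ⟨l, hl, _, hsz, hls⟩ := mem_sup.mp hx
  obtain ⟨s, rfl⟩ := mem_span_singleton.mp hsz
  obtain ⟨l', hl', _, htz, rfl⟩ := mem_sup.mp hy
  obtain ⟨t, rfl⟩ := mem_span_singleton.mp htz
  -- `l + s • v = J l' + t • J v`: pairing it, and its image under `J`, with `ω v` isolates `t`, `s`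
  have ht : t * ω v (J v) = 0 := by
    simpa [(hv l hl).1, (hv l' hl').2, hω.self_eq_zero] using congrArg (ω v) hls
  have hs : s * ω v (J v) = 0 := by
    simpa [(hv l hl).2, (hv l' hl').1, hω.self_eq_zero, hJ] using congrArg (ω v ∘ J) hls
  obtain rfl := (mul_eq_zero.mp ht).resolve_right hvv
  obtain rfl := (mul_eq_zero.mp hs).resolve_right hvv
  simp only [zero_smul, add_zero] at hls ⊢
  have : J l' ∈ L ⊓ L.map J := ⟨hls ▸ hl, mem_map_of_mem hl'⟩
  rwa [hL] at this

variable [FiniteDimensional K E]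

theorem IsTotallyReal.finrank_sup_map (hL : IsTotallyReal J L) (hJ : ∀ x, J (J x) = -x) :
    finrank K ↥(L ⊔ L.map J) = 2 * finrank K L := by
  have hinj : Function.Injective J := fun x y h => by simpa [hJ] using congrArg J h
  have := finrank_sup_add_finrank_inf_eq L (L.map J)
  rw [hL, finrank_bot, add_zero, (equivMapOfInjective J hinj L).finrank_eq.symm] at this
  omega

theorem IsTotallyReal.two_mul_finrank_le (hL : IsTotallyReal J L) (hJ : ∀ x, J (J x) = -x)
    (hLV : L ≤ V) (hJV : V.map J ≤ V) : 2 * finrank K L ≤ finrank K V :=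
  hL.finrank_sup_map hJ ▸ finrank_mono (sup_le hLV ((map_mono hLV).trans hJV))

theorem exists_mem_ne_zero_forall_apply_eq_zero (ω : E →ₗ[K] E →ₗ[K] K) {U : Submodule K E}
    (h : finrank K U < finrank K V) : ∃ v ∈ V, v ≠ 0 ∧ ∀ u ∈ U, ω v u = 0 := by
  let F : V →ₗ[K] Dual K U := LinearMap.lcomp K K U.subtype ∘ₗ ω ∘ₗ V.subtype
  have hF : LinearMap.ker F ≠ ⊥ :=
    LinearMap.ker_ne_bot_of_finrank_lt (by rwa [Subspace.dual_finrank_eq])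
  obtain ⟨⟨v, hvV⟩, hv, hv0⟩ := (Submodule.ne_bot_iff _).mp hF
  exact ⟨v, hvV, fun h => hv0 (by simp [h]), fun u hu => LinearMap.congr_fun hv ⟨u, hu⟩⟩

theorem IsTotallyReal.exists_sup_span_singleton (hL : IsTotallyReal J L) (hJ : ∀ x, J (J x) = -x)
    (hω : ω.IsAlt) (hωV : ∀ x ∈ V, ω x (J x) = 0 → x = 0)
    (hlt : 2 * finrank K L < finrank K V) :
    ∃ v ∈ V, v ∉ L ∧ IsTotallyReal J (L ⊔ K ∙ v) ∧ ∀ x ∈ L, ω v x = 0 := by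
  obtain ⟨v, hvV, hv0, hv⟩ := exists_mem_ne_zero_forall_apply_eq_zero (V := V) ω
    (U := L ⊔ L.map J) (by rwa [hL.finrank_sup_map hJ])
  have hvv : ω v (J v) ≠ 0 := fun h => hv0 (hωV v hvV h)
  have hvL (x : E) (hx : x ∈ L) : ω v x = 0 ∧ ω v (J x) = 0 :=
    ⟨hv x (mem_sup_left hx), hv _ (mem_sup_right (mem_map_of_mem hx))⟩
  exact ⟨v, hvV, fun h => hvv (hvL v h).2, hL.sup_span_singleton hJ hω hvL hvv,
    fun x hx => (hvL x hx).1⟩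

theorem IsTotallyReal.exists_le_finrank_eq (hL : IsTotallyReal J L) (hJ : ∀ x, J (J x) = -x)
    (hω : ω.IsAlt) (hωV : ∀ x ∈ V, ω x (J x) = 0 → x = 0) (hJV : V.map J ≤ V) (hLV : L ≤ V)
    {d : ℕ} (hd : finrank K V = 2 * d) :
    ∃ L', L ≤ L' ∧ L' ≤ V ∧ IsTotallyReal J L' ∧ finrank K L' = d ∧
      (IsIsotropic ω L → IsIsotropic ω L') := by
  obtain ⟨k, hk⟩ := Nat.exists_eq_add_of_le (show finrank K L ≤ d by
    have := hL.two_mul_finrank_le hJ hLV hJV; omega)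
  induction k generalizing L with
  | zero => exact ⟨L, le_rfl, hLV, hL, hk.symm, id⟩
  | succ k ih =>
    obtain ⟨v, hvV, hvL, hLv, hv⟩ := hL.exists_sup_span_singleton hJ hω hωV (by omega)
    obtain ⟨L', hLvL', hL'V, hL', hL'd, hiso⟩ :=
      ih hLv (sup_le hLV ((span_singleton_le_iff_mem _ _).mpr hvV))
      (by rw [finrank_sup_span_singleton hvL]; omega)
    refine ⟨L', le_sup_left.trans hLvL', hL'V, hL', hL'd, fun hLiso => hiso ?_⟩
    exact hLiso.sup_span_singleton (fun x hx => ⟨hv x hx, by rw [← hω.neg, hv x hx, neg_zero]⟩)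
      (hω.self_eq_zero v)

end TotallyReal

section Heisenberg

variable {K g : Type*} [Field K] [LieRing g] [LieAlgebra K g]

def bracketCoord (c : g →ₗ[K] K) : g →ₗ[K] g →ₗ[K] K :=
  (LieModule.toEnd K g g : g →ₗ[K] Module.End K g).compr₂ c

@[simp]
theorem bracketCoord_apply (c : g →ₗ[K] K) (x y : g) : bracketCoord c x y = c ⁅x, y⁆ :=
  rfl

theorem bracketCoord_isAlt (c : g →ₗ[K] K) : (bracketCoord c).IsAlt := fun x => by simp

variable {𝔫 : LieSubalgebra K g} {ζ : g}

theorem lie_eq_bracketCoord_smul (hbr : ∀ x ∈ 𝔫, ∀ y ∈ 𝔫, ⁅x, y⁆ ∈ K ∙ ζ) {c : g →ₗ[K] K}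
    (hc : c ζ = 1) {x y : g} (hx : x ∈ 𝔫) (hy : y ∈ 𝔫) : ⁅x, y⁆ = bracketCoord c x y • ζ := by
  obtain ⟨t, ht⟩ := mem_span_singleton.mp (hbr x hx y hy)
  simp [← ht, hc]

theorem IsIsotropic.sup_span_singleton_of_lie_eq_zero {c : g →ₗ[K] K} {S : Submodule K g}
    (hS : IsIsotropic (bracketCoord c) S) (hζ : ∀ x ∈ S, ⁅ζ, x⁆ = 0) :
    IsIsotropic (bracketCoord c) (S ⊔ K ∙ ζ) :=
  hS.sup_span_singleton (fun x hx => by simp [hζ x hx, ← lie_skew x ζ]) (by simp)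

theorem lie_eq_zero_of_notMem (hbr : ∀ x ∈ 𝔫, ∀ y ∈ 𝔫, ⁅x, y⁆ ∈ K ∙ ζ) {𝔫' : LieSubalgebra K g}
    (h'le : 𝔫' ≤ 𝔫) (hζ' : ζ ∉ 𝔫') {x y : g} (hx : x ∈ 𝔫') (hy : y ∈ 𝔫') : ⁅x, y⁆ = 0 := by
  obtain ⟨t, ht⟩ := mem_span_singleton.mp (hbr x (h'le hx) y (h'le hy))
  obtain rfl : t = 0 := by
    by_contra ht0
    exact hζ' ((smul_mem_iff _ ht0).mp (ht ▸ 𝔫'.lie_mem hx hy))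
  rw [← ht, zero_smul]

theorem isTotallyReal_sup_span_singleton_inf {J : g →ₗ[K] g} {V : Submodule K g}
    {c : g →ₗ[K] K} (hV : ∀ x ∈ V, c ⁅x, J x⁆ = 0 → x = 0)
    (hbr : ∀ x ∈ 𝔫, ∀ y ∈ 𝔫, ⁅x, y⁆ ∈ K ∙ ζ) (hζ : ∀ x ∈ 𝔫, ⁅ζ, x⁆ = 0)
    {𝔫' : LieSubalgebra K g} (h'le : 𝔫' ≤ 𝔫) (h'tr : IsTotallyReal J 𝔫'.toSubmodule) :
    IsTotallyReal J ((𝔫'.toSubmodule ⊔ K ∙ ζ) ⊓ V) := by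
  by_cases hζ' : ζ ∈ 𝔫'
  · refine h'tr.mono (inf_le_left.trans (sup_le le_rfl ?_))
    exact (span_singleton_le_iff_mem _ _).mpr hζ'
  · have hiso : IsIsotropic (bracketCoord c) (𝔫'.toSubmodule ⊔ K ∙ ζ) :=
      IsIsotropic.sup_span_singleton_of_lie_eq_zero
        (fun x hx y hy => by simp [lie_eq_zero_of_notMem hbr h'le hζ' hx hy])
        (fun x hx => hζ x (h'le hx))
    exact (hiso.mono inf_le_left).isTotallyReal inf_le_right hV

theorem exists_lieSubalgebra_le_isTotallyReal_finrank_eq [FiniteDimensional K g]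
    {J : g →ₗ[K] g} (hJ : ∀ x, J (J x) = -x) {V : Submodule K g} (h𝔫 : 𝔫.toSubmodule = V ⊔ K ∙ ζ)
    (hbr : ∀ x ∈ 𝔫, ∀ y ∈ 𝔫, ⁅x, y⁆ ∈ K ∙ ζ) (hζ : ∀ x ∈ 𝔫, ⁅ζ, x⁆ = 0) {c : g →ₗ[K] K}
    (hc : c ζ = 1) (hV : ∀ x ∈ V, c ⁅x, J x⁆ = 0 → x = 0) (hJV : V.map J ≤ V) (hζV : ζ ∉ V)
    (hJζ : J ζ ∉ 𝔫) {d : ℕ} (hd : finrank K V = 2 * d) {𝔫' : LieSubalgebra K g} (h'le : 𝔫' ≤ 𝔫)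
    (h'tr : IsTotallyReal J 𝔫'.toSubmodule) :
    ∃ m : LieSubalgebra K g, 𝔫' ≤ m ∧ m ≤ 𝔫 ∧ IsTotallyReal J m.toSubmodule ∧
      finrank K m = d + 1 ∧
      ((∀ x ∈ 𝔫', ∀ y ∈ 𝔫', ⁅x, y⁆ = 0) → ∀ x ∈ m, ∀ y ∈ m, ⁅x, y⁆ = 0) := by
  have hV𝔫 : V ≤ 𝔫.toSubmodule := h𝔫 ▸ le_sup_left
  have hζ𝔫 : K ∙ ζ ≤ 𝔫.toSubmodule := h𝔫 ▸ le_sup_right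
  set N := 𝔫'.toSubmodule ⊔ K ∙ ζ
  have hN𝔫 : N ≤ 𝔫.toSubmodule := sup_le (show 𝔫'.toSubmodule ≤ 𝔫.toSubmodule from h'le) hζ𝔫
  obtain ⟨L, hNL, hLV, hL, hLd, hLiso⟩ :=
    (isTotallyReal_sup_span_singleton_inf hV hbr hζ h'le h'tr).exists_le_finrank_eq hJ
      (bracketCoord_isAlt c) hV hJV inf_le_right hd
  have hM𝔫 : L ⊔ K ∙ ζ ≤ 𝔫.toSubmodule := sup_le (hLV.trans hV𝔫) hζ𝔫
  let m : LieSubalgebra K g :=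
    { L ⊔ K ∙ ζ with
      lie_mem' := fun hx hy => mem_sup_right (hbr _ (hM𝔫 hx) _ (hM𝔫 hy)) }
  refine ⟨m, fun x hx => ?_, hM𝔫, ?_, ?_, fun hab x hx y hy => ?_⟩
  · have hN : N ⊓ V ⊔ K ∙ ζ = N := by
      rw [inf_sup_assoc_of_le _ le_sup_right, ← h𝔫, inf_eq_left.mpr hN𝔫]
    exact sup_le_sup_right hNL _ (hN ▸ mem_sup_left hx)
  · exact hL.sup_span_singleton_of_notMem hLV hJV hζV (h𝔫 ▸ hJζ)
  · exact (finrank_sup_span_singleton fun h => hζV (hLV h)).trans (by rw [hLd])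
  · have hNiso : IsIsotropic (bracketCoord c) N :=
      IsIsotropic.sup_span_singleton_of_lie_eq_zero (fun x hx y hy => by simp [hab x hx y hy])
        (fun x hx => hζ x (h'le hx))
    have hMiso : IsIsotropic (bracketCoord c) (L ⊔ K ∙ ζ) :=
      (hLiso (hNiso.mono inf_le_left)).sup_span_singleton_of_lie_eq_zero
        (fun x hx => hζ x (hV𝔫 (hLV hx)))
    rw [lie_eq_bracketCoord_smul hbr hc (hM𝔫 hx) (hM𝔫 hy), hMiso x hx y hy, zero_smul]

end Heisenberg

theorem eq_zero_of_mem_span_of_apply_self_eq_zero {K E ι : Type*} [Field K] [LinearOrder K]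
    [IsStrictOrderedRing K] [AddCommGroup E] [Module K E] [Fintype ι] [DecidableEq ι]
    {B : E →ₗ[K] E →ₗ[K] K} {e : ι → E} (he : ∀ i k, B (e i) (e k) = if i = k then 1 else 0)
    {x : E} (hx : x ∈ span K (Set.range e)) (hB : B x x = 0) : x = 0 := by
  obtain ⟨a, rfl⟩ := (mem_span_range_iff_exists_fun K).mp hx
  have hsq : ∑ i, a i * a i = 0 := by
    simpa [map_sum, he, Finset.mul_sum] using hB
  have ha (i : ι) : a i = 0 :=
    mul_self_eq_zero.mp ((Finset.sum_eq_zero_iff_of_nonneg fun i _ => mul_self_nonneg (a i)).mp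
      hsq i (Finset.mem_univ i))
  simp [ha]

section BallAlgebra

variable {K g ι : Type*} [Field K] [LieRing g] [LieAlgebra K g] {α ζ : g} {ξ ξ' : ι → g}
  {j : g →ₗ[K] g}

theorem apply_apply_eq_neg_of_span_eq_top
    (hspan : span K (Set.range (Sum.elim ![α, ζ] (Sum.elim ξ ξ'))) = ⊤) (hj1 : j ζ = α)
    (hj2 : j α = -ζ) (hj3 : ∀ k, j (ξ k) = ξ' k) (hj4 : ∀ k, j (ξ' k) = -ξ k) (x : g) :
    j (j x) = -x := by
  have : j ∘ₗ j = -LinearMap.id := LinearMap.ext_on_range hspan <| by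
    rintro (i | k | k)
    · fin_cases i <;> simp [hj1, hj2]
    · simp [hj3, hj4]
    · simp [hj3, hj4]
  exact LinearMap.congr_fun this x

theorem map_span_range_union_le (hj3 : ∀ k, j (ξ k) = ξ' k) (hj4 : ∀ k, j (ξ' k) = -ξ k) :
    (span K (Set.range ξ ∪ Set.range ξ')).map j ≤ span K (Set.range ξ ∪ Set.range ξ') := by
  rw [map_span, span_le]
  rintro _ ⟨_, ⟨k, rfl⟩ | ⟨k, rfl⟩, rfl⟩
  · rw [hj3]; exact subset_span (Or.inr ⟨k, rfl⟩)
  · rw [hj4]; exact neg_mem (subset_span (Or.inl ⟨k, rfl⟩))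

theorem lie_eq_zero_of_mem_span (hb8 : ∀ k, ⁅ζ, ξ k⁆ = 0) (hb9 : ∀ k, ⁅ζ, ξ' k⁆ = 0) {x : g}
    (hx : x ∈ span K (Set.range ξ ∪ Set.range ξ' ∪ {ζ})) : ⁅ζ, x⁆ = 0 := by
  refine span_le (p := LinearMap.ker (LieModule.toEnd K g g ζ)).mpr ?_ hx
  rintro _ ((⟨k, rfl⟩ | ⟨k, rfl⟩) | h)
  · simp [hb8]
  · simp [hb9]
  · simp [Set.mem_singleton_iff.mp h]

theorem lie_mem_span_singleton_of_mem_span (hb1 : ∀ k, ⁅ξ k, ξ' k⁆ = ζ)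
    (hb2 : ∀ k l, k ≠ l → ⁅ξ k, ξ' l⁆ = 0) (hb3 : ∀ k l, ⁅ξ k, ξ l⁆ = 0)
    (hb4 : ∀ k l, ⁅ξ' k, ξ' l⁆ = 0) (hb8 : ∀ k, ⁅ζ, ξ k⁆ = 0) (hb9 : ∀ k, ⁅ζ, ξ' k⁆ = 0)
    {x y : g} (hx : x ∈ span K (Set.range ξ ∪ Set.range ξ' ∪ {ζ}))
    (hy : y ∈ span K (Set.range ξ ∪ Set.range ξ' ∪ {ζ})) : ⁅x, y⁆ ∈ K ∙ ζ := by
  have hξξ' (k l : ι) : ⁅ξ k, ξ' l⁆ ∈ K ∙ ζ := by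
    rcases eq_or_ne k l with rfl | hkl
    · rw [hb1]; exact mem_span_singleton_self ζ
    · exact hb2 k l hkl ▸ zero_mem _
  have hcent (a : g) (ha : a ∈ Set.range ξ ∪ Set.range ξ' ∪ {ζ}) : ⁅ζ, a⁆ = 0 :=
    lie_eq_zero_of_mem_span hb8 hb9 (subset_span (R := K) ha)
  have h := apply_mem_map₂ (LieModule.toEnd K g g : g →ₗ[K] Module.End K g) hx hy
  rw [map₂_span_span] at h
  refine span_le.mpr ?_ h
  rintro _ ⟨a, ha, b, hb, rfl⟩
  change ⁅a, b⁆ ∈ K ∙ ζ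
  rcases ha with ha | ha
  · rcases hb with hb | hb
    · rcases ha with ⟨k, rfl⟩ | ⟨k, rfl⟩ <;> rcases hb with ⟨l, rfl⟩ | ⟨l, rfl⟩
      · rw [hb3]; exact zero_mem _
      · exact hξξ' k l
      · rw [← lie_skew]; exact neg_mem (hξξ' l k)
      · rw [hb4]; exact zero_mem _
    · rw [Set.mem_singleton_iff.mp hb, ← lie_skew, hcent a (Or.inl ha), neg_zero]
      exact zero_mem _
  · rw [Set.mem_singleton_iff.mp ha, hcent b hb]
    exact zero_mem _

theorem eq_zero_of_coord_lie_self_eq_zero [LinearOrder K] [IsStrictOrderedRing K] [Fintype ι]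
    {c : g →ₗ[K] K} (hc : c ζ = 1) (hb1 : ∀ k, ⁅ξ k, ξ' k⁆ = ζ)
    (hb2 : ∀ k l, k ≠ l → ⁅ξ k, ξ' l⁆ = 0) (hb3 : ∀ k l, ⁅ξ k, ξ l⁆ = 0)
    (hb4 : ∀ k l, ⁅ξ' k, ξ' l⁆ = 0) (hj3 : ∀ k, j (ξ k) = ξ' k) (hj4 : ∀ k, j (ξ' k) = -ξ k)
    {x : g} (hx : x ∈ span K (Set.range ξ ∪ Set.range ξ')) (hxx : c ⁅x, j x⁆ = 0) : x = 0 := by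
  classical
  rw [← Set.Sum.elim_range] at hx
  have hξξ' (k l : ι) : c ⁅ξ k, ξ' l⁆ = if k = l then 1 else 0 := by
    split_ifs with hkl
    · rw [hkl, hb1, hc]
    · rw [hb2 k l hkl, map_zero]
  refine eq_zero_of_mem_span_of_apply_self_eq_zero (B := (bracketCoord c).compl₂ j) ?_ hx hxx
  rintro (k | k) (l | l)
  · simpa [hj3] using hξξ' k l
  · simp [hj4, hb3]
  · simp [hj3, hb4]
  · simp only [Sum.elim_inr, LinearMap.compl₂_apply, hj4, bracketCoord_apply, lie_neg, lie_skew,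
      Sum.inr.injEq, hξξ']
    exact if_congr eq_comm rfl rfl

end BallAlgebra

theorem statement2_general (n : ℕ) (hn : 1 ≤ n) (g : Type*) [LieRing g] [LieAlgebra ℝ g]
    (α ζ : g) (ξ ξ' : Fin (n - 1) → g)
    (hindep : LinearIndependent ℝ (Sum.elim ![α, ζ] (Sum.elim ξ ξ')))
    (hspan : Submodule.span ℝ (Set.range (Sum.elim ![α, ζ] (Sum.elim ξ ξ'))) = ⊤)
    (hb1 : ∀ k, ⁅ξ k, ξ' k⁆ = ζ)
    (hb2 : ∀ k l, k ≠ l → ⁅ξ k, ξ' l⁆ = (0 : g))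
    (hb3 : ∀ k l, ⁅ξ k, ξ l⁆ = (0 : g))
    (hb4 : ∀ k l, ⁅ξ' k, ξ' l⁆ = (0 : g))
    (hb8 : ∀ k, ⁅ζ, ξ k⁆ = (0 : g))
    (hb9 : ∀ k, ⁅ζ, ξ' k⁆ = (0 : g))
    (j : g →ₗ[ℝ] g)
    (hj1 : j ζ = α) (hj2 : j α = -ζ)
    (hj3 : ∀ k, j (ξ k) = ξ' k) (hj4 : ∀ k, j (ξ' k) = -ξ k)
    (𝔫 : LieSubalgebra ℝ g)
    (h𝔫 : 𝔫.toSubmodule =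
      Submodule.span ℝ (Set.range ξ ∪ Set.range ξ' ∪ {ζ}))
    (𝔫' : LieSubalgebra ℝ g) (h'le : 𝔫' ≤ 𝔫)
    (h'tr : 𝔫'.toSubmodule ⊓ (𝔫'.toSubmodule.map j) = ⊥) :
    (∃ m : LieSubalgebra ℝ g, 𝔫' ≤ m ∧ m ≤ 𝔫 ∧
        m.toSubmodule ⊓ (m.toSubmodule.map j) = ⊥ ∧ Module.finrank ℝ m = n) ∧
      ((∀ x ∈ 𝔫', ∀ y ∈ 𝔫', ⁅x, y⁆ = (0 : g)) →
        ∃ m : LieSubalgebra ℝ g, 𝔫' ≤ m ∧ m ≤ 𝔫 ∧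
          m.toSubmodule ⊓ (m.toSubmodule.map j) = ⊥ ∧ Module.finrank ℝ m = n ∧
          ∀ x ∈ m, ∀ y ∈ m, ⁅x, y⁆ = (0 : g)) := by
  let b := Module.Basis.mk hindep hspan.ge
  have : FiniteDimensional ℝ g := Module.Finite.of_basis b
  have hc : b.coord (Sum.inl 1) ζ = 1 := by
    rw [show ζ = b (Sum.inl 1) by simp [b], Module.Basis.coord_apply, Module.Basis.repr_self,
      Finsupp.single_eq_same]
  set V := span ℝ (Set.range ξ ∪ Set.range ξ') with hV
  have h𝔫V : 𝔫.toSubmodule = V ⊔ ℝ ∙ ζ := by rw [h𝔫, span_union]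
  have hζV : ζ ∉ V := by
    simpa [hV, span_union, ← Set.range_comp] using
      hindep.notMem_span_image (s := Set.range Sum.inr) (x := Sum.inl 1) (by simp)
  have hα𝔫 : α ∉ 𝔫 := by
    simpa [← LieSubalgebra.mem_toSubmodule, h𝔫, Set.image_union, ← Set.range_comp] using
      hindep.notMem_span_image (s := Set.range Sum.inr ∪ {Sum.inl 1}) (x := Sum.inl 0) (by simp)
  have hd : finrank ℝ V = 2 * (n - 1) := by
    rw [hV, ← Set.Sum.elim_range,
      finrank_span_eq_card (b := Sum.elim ξ ξ') (hindep.comp Sum.inr Sum.inr_injective)]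
    simp [two_mul]
  obtain ⟨m, h'm, hm𝔫, hm, hmd, hmab⟩ := exists_lieSubalgebra_le_isTotallyReal_finrank_eq
    (apply_apply_eq_neg_of_span_eq_top hspan hj1 hj2 hj3 hj4) h𝔫V
    (fun x hx y hy => lie_mem_span_singleton_of_mem_span hb1 hb2 hb3 hb4 hb8 hb9 (h𝔫 ▸ hx)
      (h𝔫 ▸ hy))
    (fun x hx => lie_eq_zero_of_mem_span (K := ℝ) hb8 hb9 (h𝔫 ▸ hx)) hc
    (fun x hx => eq_zero_of_coord_lie_self_eq_zero hc hb1 hb2 hb3 hb4 hj3 hj4 hx)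
    (map_span_range_union_le hj3 hj4) hζV (hj1 ▸ hα𝔫) hd h'le h'tr
  rw [Nat.sub_add_cancel hn] at hmd
  exact ⟨⟨m, h'm, hm𝔫, hm, hmd⟩, fun hab => ⟨m, h'm, hm𝔫, hm, hmd, hmab hab⟩⟩

/-- Let `g` (with linear map `j` and nilradical `𝔫`) be the normal
`j`-algebra of the `n`-dimensional unit ball: `g` has basis
`α, ζ, ξ_1, …, ξ_{n-1}, ξ'_1, …, ξ'_{n-1}` with only nonvanishing brackets
`[ξ_k, ξ'_k] = ζ`, `[α, ξ_k] = -ξ_k`, `[α, ξ'_k] = -ξ'_k`, `[α, ζ] = -2ζ`, and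
`j(ζ) = α`, `j(α) = -ζ`, `j(ξ_k) = ξ'_k`, `j(ξ'_k) = -ξ_k`; `𝔫` is spanned by the
`ξ_k, ξ'_k, ζ`. Then every totally real Lie subalgebra `𝔫'` of `𝔫` is contained in a
maximal totally real subalgebra `𝔫̂'` of `𝔫` (totally real with `dim_ℝ 𝔫̂' = n`);
moreover if `𝔫'` is abelian then `𝔫̂'` can be chosen abelian. -/
theorem statement2 (n : ℕ) (hn : 1 ≤ n) (g : Type*) [LieRing g] [LieAlgebra ℝ g]
    (α ζ : g) (ξ ξ' : Fin (n - 1) → g)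
    (hindep : LinearIndependent ℝ (Sum.elim ![α, ζ] (Sum.elim ξ ξ')))
    (hspan : Submodule.span ℝ (Set.range (Sum.elim ![α, ζ] (Sum.elim ξ ξ'))) = ⊤)
    (hb1 : ∀ k, ⁅ξ k, ξ' k⁆ = ζ)
    (hb2 : ∀ k l, k ≠ l → ⁅ξ k, ξ' l⁆ = (0 : g))
    (hb3 : ∀ k l, ⁅ξ k, ξ l⁆ = (0 : g))
    (hb4 : ∀ k l, ⁅ξ' k, ξ' l⁆ = (0 : g))
    (hb5 : ∀ k, ⁅α, ξ k⁆ = -ξ k)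
    (hb6 : ∀ k, ⁅α, ξ' k⁆ = -ξ' k)
    (hb7 : ⁅α, ζ⁆ = (-2 : ℝ) • ζ)
    (hb8 : ∀ k, ⁅ζ, ξ k⁆ = (0 : g))
    (hb9 : ∀ k, ⁅ζ, ξ' k⁆ = (0 : g))
    (j : g →ₗ[ℝ] g)
    (hj1 : j ζ = α) (hj2 : j α = -ζ)
    (hj3 : ∀ k, j (ξ k) = ξ' k) (hj4 : ∀ k, j (ξ' k) = -ξ k)
    (𝔫 : LieSubalgebra ℝ g)
    (h𝔫 : 𝔫.toSubmodule =
      Submodule.span ℝ (Set.range ξ ∪ Set.range ξ' ∪ {ζ}))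
    (𝔫' : LieSubalgebra ℝ g) (h'le : 𝔫' ≤ 𝔫)
    (h'tr : 𝔫'.toSubmodule ⊓ (𝔫'.toSubmodule.map j) = ⊥) :
    (∃ m : LieSubalgebra ℝ g, 𝔫' ≤ m ∧ m ≤ 𝔫 ∧
        m.toSubmodule ⊓ (m.toSubmodule.map j) = ⊥ ∧ Module.finrank ℝ m = n) ∧
      ((∀ x ∈ 𝔫', ∀ y ∈ 𝔫', ⁅x, y⁆ = (0 : g)) →
        ∃ m : LieSubalgebra ℝ g, 𝔫' ≤ m ∧ m ≤ 𝔫 ∧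
          m.toSubmodule ⊓ (m.toSubmodule.map j) = ⊥ ∧ Module.finrank ℝ m = n ∧
          ∀ x ∈ m, ∀ y ∈ m, ⁅x, y⁆ = (0 : g)) :=
  statement2_general n hn g α ζ ξ ξ' hindep hspan hb1 hb2 hb3 hb4 hb8 hb9 j hj1 hj2 hj3 hj4 𝔫 h𝔫 𝔫'
    h'le h'tr
end

section
/- Let g, j and 𝔫 be the normal j-algebra data of the 3-dimensional Lie ball, i.e. the case n = 3 of the presentation in the context, with basis δ, α, η, ζ, ξ_1, ξ'_1. Then the one-dimensional totally real Lie subalgebra ℝξ'_1 of 𝔫 is not contained in any maximal totally real Lie subalgebra of 𝔫; that is, there is no Lie subalgebra m of 𝔫 with ξ'_1 ∈ m, m ∩ j(m) = {0}, and dim_ℝ m = 3. -/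
/-!
If `m ⊆ 𝔫` is three-dimensional and contains `ξ'₁`, then `ξ₁ ∈ m`: either `m` misses the
`η`-direction, and then it is `span {ξ₁, ξ'₁, ζ}`, or some `v ∈ m` has a nonzero `η`-coefficient,
and then `ad ξ'₁` applied once and twice to `v` produces `ξ₁` and `ζ` inside `m`. But then
`ξ'₁ = j ξ₁` lies in `m ∩ j(m)`, so `m` is not totally real.
-/

section
variable {K L : Type*} [Field K] [LieRing L] [LieAlgebra K L] {ξ ξ' ζ η : L} {c : K}

theorem lie_smul_add_right_eq (h₁ : ⁅ξ, ξ'⁆ = ζ) (h₂ : ⁅η, ξ'⁆ = c • ξ) (h₃ : ⁅ζ, ξ'⁆ = 0)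
    (a b e d : K) :
    ⁅a • ξ + b • ξ' + e • ζ + d • η, ξ'⁆ = (c * d) • ξ + a • ζ := by
  simp only [add_lie, smul_lie, h₁, h₂, h₃, lie_self, smul_zero, add_zero, smul_smul]
  module

theorem LieSubalgebra.mem_of_smul_add_mem {m : LieSubalgebra K L}
    (h₁ : ⁅ξ, ξ'⁆ = ζ) (h₂ : ⁅η, ξ'⁆ = c • ξ) (h₃ : ⁅ζ, ξ'⁆ = 0) (hc : c ≠ 0)
    (hξ' : ξ' ∈ m) {a b e d : K} (hd : d ≠ 0) (hv : a • ξ + b • ξ' + e • ζ + d • η ∈ m) :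
    ξ ∈ m := by
  have hw : (c * d) • ξ + a • ζ ∈ m :=
    lie_smul_add_right_eq h₁ h₂ h₃ a b e d ▸ m.lie_mem hv hξ'
  have hζ : ζ ∈ m := by
    have hw' : ⁅(c * d) • ξ + a • ζ, ξ'⁆ = (c * d) • ζ := by
      simp only [add_lie, smul_lie, h₁, h₃, smul_zero, add_zero]
    exact (m.smul_mem_iff (mul_ne_zero hc hd)).mp (hw' ▸ m.lie_mem hw hξ')
  refine (m.smul_mem_iff (mul_ne_zero hc hd)).mp ?_
  simpa using m.sub_mem hw (m.smul_mem a hζ)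

theorem Submodule.exists_smul_add_eq_of_mem_span_of_notMem {v : L}
    (hv : v ∈ span K {ξ, ξ', ζ, η}) (hvU : v ∉ span K {ξ, ξ', ζ}) :
    ∃ a b e d : K, d ≠ 0 ∧ a • ξ + b • ξ' + e • ζ + d • η = v := by
  simp only [mem_span_insert, mem_span_singleton] at hv hvU
  obtain ⟨a, _, ⟨b, _, ⟨e, _, ⟨d, rfl⟩, rfl⟩, rfl⟩, rfl⟩ := hv
  refine ⟨a, b, e, d, ?_, by abel⟩
  rintro rfl
  exact hvU ⟨a, _, ⟨b, _, ⟨e, rfl⟩, rfl⟩, by simp⟩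

theorem Submodule.mem_of_le_span_of_three_le_finrank {m : Submodule K L}
    (hm : m ≤ span K {ξ, ξ', ζ}) (hdim : 3 ≤ Module.finrank K m) : ξ ∈ m := by
  classical
  have hU : Module.finrank K (span K {ξ, ξ', ζ}) ≤ 3 :=
    (finrank_span_le_card ({ξ, ξ', ζ} : Set L)).trans (by simpa using Finset.card_le_three)
  have : FiniteDimensional K (span K {ξ, ξ', ζ}) :=
    FiniteDimensional.span_of_finite K (Set.toFinite _)
  rw [eq_of_le_of_finrank_le hm (hU.trans hdim)]
  exact subset_span (by simp)

theorem LieSubalgebra.mem_of_three_le_finrank {m : LieSubalgebra K L}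
    (h₁ : ⁅ξ, ξ'⁆ = ζ) (h₂ : ⁅η, ξ'⁆ = c • ξ) (h₃ : ⁅ζ, ξ'⁆ = 0) (hc : c ≠ 0)
    (hm : m.toSubmodule ≤ Submodule.span K {ξ, ξ', ζ, η}) (hξ' : ξ' ∈ m)
    (hdim : 3 ≤ Module.finrank K m) : ξ ∈ m := by
  by_cases hU : m.toSubmodule ≤ Submodule.span K {ξ, ξ', ζ}
  · exact Submodule.mem_of_le_span_of_three_le_finrank hU hdim
  · obtain ⟨v, hvm, hvU⟩ := SetLike.not_le_iff_exists.mp hU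
    obtain ⟨a, b, e, d, hd, rfl⟩ :=
      Submodule.exists_smul_add_eq_of_mem_span_of_notMem (hm hvm) hvU
    exact m.mem_of_smul_add_mem h₁ h₂ h₃ hc hξ' hd hvm

end

theorem statement4_general (g : Type*) [LieRing g] [LieAlgebra ℝ g]
    (δ α η ζ ξ₁ ξ'₁ : g)
    (hindep : LinearIndependent ℝ ![δ, α, η, ζ, ξ₁, ξ'₁])
    (hb1 : ⁅ξ₁, ξ'₁⁆ = ζ)
    (hb2 : ⁅η, ξ'₁⁆ = (2 : ℝ) • ξ₁)
    (hz7 : ⁅ζ, ξ'₁⁆ = (0 : g))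
    (j : g →ₗ[ℝ] g)
    (hj1 : j ξ₁ = ξ'₁)
    (𝔫 : LieSubalgebra ℝ g)
    (h𝔫 : 𝔫.toSubmodule = Submodule.span ℝ {ξ₁, ξ'₁, ζ, η}) :
    ¬ ∃ m : LieSubalgebra ℝ g, m ≤ 𝔫 ∧ ξ'₁ ∈ m ∧
        m.toSubmodule ⊓ (m.toSubmodule.map j) = ⊥ ∧ Module.finrank ℝ m = 3 := by
  rintro ⟨m, hm𝔫, hξ'm, htr, hdim⟩
  have hm : m.toSubmodule ≤ Submodule.span ℝ {ξ₁, ξ'₁, ζ, η} := h𝔫 ▸ hm𝔫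
  have hξ₁m : ξ₁ ∈ m :=
    m.mem_of_three_le_finrank hb1 hb2 hz7 two_ne_zero hm hξ'm hdim.ge
  have hξ'₁ : ξ'₁ ∈ m.toSubmodule ⊓ m.toSubmodule.map j := ⟨hξ'm, ξ₁, hξ₁m, hj1⟩
  rw [htr, Submodule.mem_bot] at hξ'₁
  exact hindep.ne_zero 5 hξ'₁

/-- Let `g` (with linear map `j` and nilradical `𝔫`) be the normal
`j`-algebra of the 3-dimensional Lie ball, with basis `δ, α, η, ζ, ξ₁, ξ'₁`, only
nonvanishing brackets `[ξ₁,ξ'₁] = ζ`, `[η,ξ'₁] = 2ξ₁`, `[δ,ξ₁] = -ξ₁`, `[δ,ζ] = -ζ`,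
`[δ,η] = -η`, `[α,ξ'₁] = -ξ'₁`, `[α,ζ] = -ζ`, `[α,η] = η`, and
`j(ξ₁) = ξ'₁`, `j(ξ'₁) = -ξ₁`, `j(ζ) = α + δ`, `j(η) = δ - α`, `j(δ) = -(ζ+η)/2`,
`j(α) = (η-ζ)/2`; `𝔫` is spanned by `ξ₁, ξ'₁, ζ, η`. Then the totally real subalgebra
`ℝξ'₁` of `𝔫` is not contained in any maximal totally real Lie subalgebra of `𝔫`: there
is no Lie subalgebra `m` of `𝔫` with `ξ'₁ ∈ m`, `m ∩ j(m) = {0}` and `dim_ℝ m = 3`. -/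
theorem statement4 (g : Type*) [LieRing g] [LieAlgebra ℝ g]
    (δ α η ζ ξ₁ ξ'₁ : g)
    (hindep : LinearIndependent ℝ ![δ, α, η, ζ, ξ₁, ξ'₁])
    (hspan : Submodule.span ℝ (Set.range ![δ, α, η, ζ, ξ₁, ξ'₁]) = ⊤)
    (hb1 : ⁅ξ₁, ξ'₁⁆ = ζ)
    (hb2 : ⁅η, ξ'₁⁆ = (2 : ℝ) • ξ₁)
    (hb3 : ⁅δ, ξ₁⁆ = -ξ₁)
    (hb4 : ⁅δ, ζ⁆ = -ζ)
    (hb5 : ⁅δ, η⁆ = -η)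
    (hb6 : ⁅α, ξ'₁⁆ = -ξ'₁)
    (hb7 : ⁅α, ζ⁆ = -ζ)
    (hb8 : ⁅α, η⁆ = η)
    (hz1 : ⁅δ, α⁆ = (0 : g))
    (hz2 : ⁅δ, ξ'₁⁆ = (0 : g))
    (hz3 : ⁅α, ξ₁⁆ = (0 : g))
    (hz4 : ⁅η, ξ₁⁆ = (0 : g))
    (hz5 : ⁅η, ζ⁆ = (0 : g))
    (hz6 : ⁅ζ, ξ₁⁆ = (0 : g))
    (hz7 : ⁅ζ, ξ'₁⁆ = (0 : g))
    (j : g →ₗ[ℝ] g)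
    (hj1 : j ξ₁ = ξ'₁) (hj2 : j ξ'₁ = -ξ₁)
    (hj3 : j ζ = α + δ) (hj4 : j η = δ - α)
    (hj5 : j δ = -((1 / 2 : ℝ) • (ζ + η))) (hj6 : j α = (1 / 2 : ℝ) • (η - ζ))
    (𝔫 : LieSubalgebra ℝ g)
    (h𝔫 : 𝔫.toSubmodule = Submodule.span ℝ {ξ₁, ξ'₁, ζ, η}) :
    ¬ ∃ m : LieSubalgebra ℝ g, m ≤ 𝔫 ∧ ξ'₁ ∈ m ∧
        m.toSubmodule ⊓ (m.toSubmodule.map j) = ⊥ ∧ Module.finrank ℝ m = 3 :=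
  statement4_general g δ α η ζ ξ₁ ξ'₁ hindep hb1 hb2 hz7 j hj1 𝔫 h𝔫
end

section
/- Let g, j and 𝔫 be the 10-dimensional Lie algebra data described in the context, and set x₁ := ξ'₃₁ + ζ₃ + ξ₂₁, x₂ := −ξ₃₁ + ξ'₂₁, x₃ := ζ₃ + ζ₂ (these satisfy [x₁, x₂] = x₃ and span a 3-dimensional Heisenberg subalgebra 𝔫_Γ of 𝔫 with 𝔫_Γ ∩ j(𝔫_Γ) = {0}). Then 𝔫_Γ is not contained in any maximal totally real Lie subalgebra of 𝔫; that is, there is no Lie subalgebra m of 𝔫 with x₁, x₂, x₃ ∈ m, m ∩ j(m) = {0}, and dim_ℝ m = 5. -/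
/-!
Let `v := ξ'₃₁ + ξ₂₁`. Since `j v = x₂ ≠ 0` lies in `m`, total reality forces `v ∉ m`, and then
`ζ₃ = x₁ - v ∉ m`. Write `y ∈ m` in the basis of `𝔫`, with coefficient `a` on `ξ'₃₂`. Then
`⁅⁅x₃, y⁆, y⁆ = 2a² ζ₃` forces `a = 0`; after that, modulo `x₁` and `x₃`, the brackets `⁅x₁, y⁆`
and `⁅x₂, y⁆` are `p ξ₃₂ + q v` and `q ξ₃₂ - p v`, so `(p² + q²) v ∈ m` and `p = q = 0`.
Hence `m` lies in the span of `ξ₃₁ - ξ'₂₁, ξ₃₂, v, ζ₃, ζ₂`, which contains `v ∉ m`, so `dim m < 5`.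
-/

open Submodule

theorem lie_eq_neg_of_lie_eq {L : Type*} [LieRing L] {x y z : L} (h : ⁅y, x⁆ = z) :
    ⁅x, y⁆ = -z := by
  rw [← lie_skew, h]

theorem Submodule.exists_eq_of_mem_span_eight {R M : Type*} [Ring R] [AddCommGroup M]
    [Module R M] {v₁ v₂ v₃ v₄ v₅ v₆ v₇ v₈ y : M}
    (hy : y ∈ span R {v₁, v₂, v₃, v₄, v₅, v₆, v₇, v₈}) :
    ∃ a₁ a₂ a₃ a₄ a₅ a₆ a₇ a₈ : R, y = a₁ • v₁ + a₂ • v₂ + a₃ • v₃ + a₄ • v₄ + a₅ • v₅ +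
      a₆ • v₆ + a₇ • v₇ + a₈ • v₈ := by
  simp only [mem_span_insert, mem_span_singleton] at hy
  obtain ⟨a₁, _, ⟨a₂, _, ⟨a₃, _, ⟨a₄, _, ⟨a₅, _, ⟨a₆, _, ⟨a₇, _, ⟨a₈, rfl⟩, rfl⟩, rfl⟩, rfl⟩,
    rfl⟩, rfl⟩, rfl⟩, rfl⟩ := hy
  exact ⟨a₁, a₂, a₃, a₄, a₅, a₆, a₇, a₈, by abel⟩

theorem Submodule.eq_zero_of_smul_mem_of_notMem {K V : Type*} [DivisionRing K] [AddCommGroup V]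
    [Module K V] {p : Submodule K V} {c : K} {v : V} (hc : c • v ∈ p) (hv : v ∉ p) : c = 0 := by
  by_contra h
  exact hv ((p.smul_mem_iff h).1 hc)

theorem Submodule.apply_eq_zero_of_inf_map_eq_bot {R M : Type*} [Semiring R] [AddCommMonoid M]
    [Module R M] {p : Submodule R M} {f : M →ₗ[R] M} (hp : p ⊓ p.map f = ⊥) {x : M} (hx : x ∈ p)
    (hfx : f x ∈ p) : f x = 0 :=
  (mem_bot R).1 (hp ▸ ⟨hfx, x, hx, rfl⟩)

structure NilradicalBrackets {g : Type*} [LieRing g] [LieAlgebra ℝ g]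
    (ξ₃₁ ξ₃₂ ξ'₃₁ ξ'₃₂ ζ₃ ξ₂₁ ξ'₂₁ ζ₂ : g) : Prop where
  lie_ξ₃₁_ξ'₃₁ : ⁅ξ₃₁, ξ'₃₁⁆ = ζ₃
  lie_ξ₃₂_ξ'₃₂ : ⁅ξ₃₂, ξ'₃₂⁆ = ζ₃
  lie_ξ₂₁_ξ'₂₁ : ⁅ξ₂₁, ξ'₂₁⁆ = ζ₂
  lie_ξ₂₁_ξ'₃₁ : ⁅ξ₂₁, ξ'₃₁⁆ = -ξ₃₂
  lie_ξ₂₁_ξ'₃₂ : ⁅ξ₂₁, ξ'₃₂⁆ = -ξ₃₁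
  lie_ξ'₂₁_ξ₃₁ : ⁅ξ'₂₁, ξ₃₁⁆ = ξ₃₂
  lie_ξ'₂₁_ξ'₃₂ : ⁅ξ'₂₁, ξ'₃₂⁆ = -ξ'₃₁
  lie_ζ₂_ξ'₃₂ : ⁅ζ₂, ξ'₃₂⁆ = (2 : ℝ) • ξ₃₂
  lie_ξ₃₁_ξ₃₂ : ⁅ξ₃₁, ξ₃₂⁆ = 0
  lie_ξ₃₁_ξ'₃₂ : ⁅ξ₃₁, ξ'₃₂⁆ = 0
  lie_ξ₃₁_ζ₃ : ⁅ξ₃₁, ζ₃⁆ = 0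
  lie_ξ₃₁_ξ₂₁ : ⁅ξ₃₁, ξ₂₁⁆ = 0
  lie_ξ₃₁_ζ₂ : ⁅ξ₃₁, ζ₂⁆ = 0
  lie_ξ₃₂_ξ'₃₁ : ⁅ξ₃₂, ξ'₃₁⁆ = 0
  lie_ξ₃₂_ζ₃ : ⁅ξ₃₂, ζ₃⁆ = 0
  lie_ξ₃₂_ξ₂₁ : ⁅ξ₃₂, ξ₂₁⁆ = 0
  lie_ξ₃₂_ξ'₂₁ : ⁅ξ₃₂, ξ'₂₁⁆ = 0
  lie_ξ₃₂_ζ₂ : ⁅ξ₃₂, ζ₂⁆ = 0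
  lie_ξ'₃₁_ξ'₃₂ : ⁅ξ'₃₁, ξ'₃₂⁆ = 0
  lie_ξ'₃₁_ζ₃ : ⁅ξ'₃₁, ζ₃⁆ = 0
  lie_ξ'₃₁_ξ'₂₁ : ⁅ξ'₃₁, ξ'₂₁⁆ = 0
  lie_ξ'₃₁_ζ₂ : ⁅ξ'₃₁, ζ₂⁆ = 0
  lie_ξ'₃₂_ζ₃ : ⁅ξ'₃₂, ζ₃⁆ = 0
  lie_ζ₃_ξ₂₁ : ⁅ζ₃, ξ₂₁⁆ = 0
  lie_ζ₃_ξ'₂₁ : ⁅ζ₃, ξ'₂₁⁆ = 0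
  lie_ζ₃_ζ₂ : ⁅ζ₃, ζ₂⁆ = 0
  lie_ξ₂₁_ζ₂ : ⁅ξ₂₁, ζ₂⁆ = 0
  lie_ξ'₂₁_ζ₂ : ⁅ξ'₂₁, ζ₂⁆ = 0

namespace NilradicalBrackets

variable {g : Type*} [LieRing g] [LieAlgebra ℝ g] {ξ₃₁ ξ₃₂ ξ'₃₁ ξ'₃₂ ζ₃ ξ₂₁ ξ'₂₁ ζ₂ : g}
  {a₁ a₂ a₃ a₄ a₅ a₆ a₇ a₈ : ℝ}

theorem lie_ζ₃_add_ζ₂ (h : NilradicalBrackets ξ₃₁ ξ₃₂ ξ'₃₁ ξ'₃₂ ζ₃ ξ₂₁ ξ'₂₁ ζ₂) :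
    ⁅ζ₃ + ζ₂, a₁ • ξ₃₁ + a₂ • ξ₃₂ + a₃ • ξ'₃₁ + a₄ • ξ'₃₂ + a₅ • ζ₃ + a₆ • ξ₂₁ + a₇ • ξ'₂₁ +
      a₈ • ζ₂⁆ = (2 * a₄) • ξ₃₂ := by
  simp only [add_lie, lie_add, lie_smul, lie_self, h.lie_ζ₂_ξ'₃₂, h.lie_ζ₃_ξ₂₁, h.lie_ζ₃_ξ'₂₁,
    h.lie_ζ₃_ζ₂, lie_eq_neg_of_lie_eq h.lie_ξ₃₁_ζ₃, lie_eq_neg_of_lie_eq h.lie_ξ₃₂_ζ₃,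
    lie_eq_neg_of_lie_eq h.lie_ξ'₃₁_ζ₃, lie_eq_neg_of_lie_eq h.lie_ξ'₃₂_ζ₃,
    lie_eq_neg_of_lie_eq h.lie_ξ₃₁_ζ₂, lie_eq_neg_of_lie_eq h.lie_ξ₃₂_ζ₂,
    lie_eq_neg_of_lie_eq h.lie_ξ'₃₁_ζ₂, lie_eq_neg_of_lie_eq h.lie_ζ₃_ζ₂,
    lie_eq_neg_of_lie_eq h.lie_ξ₂₁_ζ₂, lie_eq_neg_of_lie_eq h.lie_ξ'₂₁_ζ₂]
  module

theorem lie_ξ₃₂ (h : NilradicalBrackets ξ₃₁ ξ₃₂ ξ'₃₁ ξ'₃₂ ζ₃ ξ₂₁ ξ'₂₁ ζ₂) :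
    ⁅ξ₃₂, a₁ • ξ₃₁ + a₂ • ξ₃₂ + a₃ • ξ'₃₁ + a₄ • ξ'₃₂ + a₅ • ζ₃ + a₆ • ξ₂₁ + a₇ • ξ'₂₁ +
      a₈ • ζ₂⁆ = a₄ • ζ₃ := by
  simp only [lie_add, lie_smul, lie_self, h.lie_ξ₃₂_ξ'₃₂, h.lie_ξ₃₂_ξ'₃₁, h.lie_ξ₃₂_ζ₃,
    h.lie_ξ₃₂_ξ₂₁, h.lie_ξ₃₂_ξ'₂₁, h.lie_ξ₃₂_ζ₂, lie_eq_neg_of_lie_eq h.lie_ξ₃₁_ξ₃₂]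
  module

theorem lie_x₁ (h : NilradicalBrackets ξ₃₁ ξ₃₂ ξ'₃₁ ξ'₃₂ ζ₃ ξ₂₁ ξ'₂₁ ζ₂) :
    ⁅ξ'₃₁ + ζ₃ + ξ₂₁, a₁ • ξ₃₁ + a₂ • ξ₃₂ + a₃ • ξ'₃₁ + a₄ • ξ'₃₂ + a₅ • ζ₃ + a₆ • ξ₂₁ +
      a₇ • ξ'₂₁ + a₈ • ζ₂⁆ = -a₁ • ζ₃ + (a₆ - a₃) • ξ₃₂ - a₄ • ξ₃₁ + a₇ • ζ₂ := by
  simp only [add_lie, lie_add, lie_smul, lie_self, h.lie_ξ'₃₁_ξ'₃₂, h.lie_ξ'₃₁_ζ₃,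
    h.lie_ξ'₃₁_ξ'₂₁, h.lie_ξ'₃₁_ζ₂, h.lie_ζ₃_ξ₂₁, h.lie_ζ₃_ξ'₂₁, h.lie_ζ₃_ζ₂, h.lie_ξ₂₁_ξ'₃₁,
    h.lie_ξ₂₁_ξ'₃₂, h.lie_ξ₂₁_ξ'₂₁, h.lie_ξ₂₁_ζ₂, lie_eq_neg_of_lie_eq h.lie_ξ₃₁_ξ'₃₁,
    lie_eq_neg_of_lie_eq h.lie_ξ₃₂_ξ'₃₁, lie_eq_neg_of_lie_eq h.lie_ξ₂₁_ξ'₃₁,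
    lie_eq_neg_of_lie_eq h.lie_ξ₃₁_ζ₃, lie_eq_neg_of_lie_eq h.lie_ξ₃₂_ζ₃,
    lie_eq_neg_of_lie_eq h.lie_ξ'₃₁_ζ₃, lie_eq_neg_of_lie_eq h.lie_ξ'₃₂_ζ₃,
    lie_eq_neg_of_lie_eq h.lie_ζ₃_ξ₂₁, lie_eq_neg_of_lie_eq h.lie_ξ₃₁_ξ₂₁,
    lie_eq_neg_of_lie_eq h.lie_ξ₃₂_ξ₂₁]
  module

theorem lie_x₂ (h : NilradicalBrackets ξ₃₁ ξ₃₂ ξ'₃₁ ξ'₃₂ ζ₃ ξ₂₁ ξ'₂₁ ζ₂) :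
    ⁅-ξ₃₁ + ξ'₂₁, a₁ • ξ₃₁ + a₂ • ξ₃₂ + a₃ • ξ'₃₁ + a₄ • ξ'₃₂ + a₅ • ζ₃ + a₆ • ξ₂₁ +
      a₇ • ξ'₂₁ + a₈ • ζ₂⁆ = (a₁ + a₇) • ξ₃₂ - a₃ • ζ₃ - a₆ • ζ₂ - a₄ • ξ'₃₁ := by
  simp only [add_lie, neg_lie, lie_add, lie_smul, lie_self, h.lie_ξ₃₁_ξ'₃₁, h.lie_ξ₃₁_ξ₃₂,
    h.lie_ξ₃₁_ξ'₃₂, h.lie_ξ₃₁_ζ₃, h.lie_ξ₃₁_ξ₂₁, h.lie_ξ₃₁_ζ₂, h.lie_ξ'₂₁_ξ₃₁,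
    h.lie_ξ'₂₁_ξ'₃₂, h.lie_ξ'₂₁_ζ₂, lie_eq_neg_of_lie_eq h.lie_ξ'₂₁_ξ₃₁,
    lie_eq_neg_of_lie_eq h.lie_ξ₃₂_ξ'₂₁, lie_eq_neg_of_lie_eq h.lie_ξ'₃₁_ξ'₂₁,
    lie_eq_neg_of_lie_eq h.lie_ζ₃_ξ'₂₁, lie_eq_neg_of_lie_eq h.lie_ξ₂₁_ξ'₂₁]
  module

theorem coeff_ξ'₃₂_eq_zero_of_mem (h : NilradicalBrackets ξ₃₁ ξ₃₂ ξ'₃₁ ξ'₃₂ ζ₃ ξ₂₁ ξ'₂₁ ζ₂)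
    {m : LieSubalgebra ℝ g} (hx₃ : ζ₃ + ζ₂ ∈ m) (hζ₃ : ζ₃ ∉ m)
    (hy : a₁ • ξ₃₁ + a₂ • ξ₃₂ + a₃ • ξ'₃₁ + a₄ • ξ'₃₂ + a₅ • ζ₃ + a₆ • ξ₂₁ + a₇ • ξ'₂₁ +
      a₈ • ζ₂ ∈ m) : a₄ = 0 := by
  have hmem := m.lie_mem (m.lie_mem hx₃ hy) hy
  rw [h.lie_ζ₃_add_ζ₂, smul_lie, h.lie_ξ₃₂, smul_smul] at hmem
  simpa using eq_zero_of_smul_mem_of_notMem (p := m.toSubmodule) hmem hζ₃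

theorem coeffs_of_mem (h : NilradicalBrackets ξ₃₁ ξ₃₂ ξ'₃₁ ξ'₃₂ ζ₃ ξ₂₁ ξ'₂₁ ζ₂)
    {m : LieSubalgebra ℝ g} (hx₁ : ξ'₃₁ + ζ₃ + ξ₂₁ ∈ m) (hx₂ : -ξ₃₁ + ξ'₂₁ ∈ m)
    (hx₃ : ζ₃ + ζ₂ ∈ m) (hv : ξ'₃₁ + ξ₂₁ ∉ m)
    (hy : a₁ • ξ₃₁ + a₂ • ξ₃₂ + a₃ • ξ'₃₁ + a₄ • ξ'₃₂ + a₅ • ζ₃ + a₆ • ξ₂₁ + a₇ • ξ'₂₁ +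
      a₈ • ζ₂ ∈ m) : a₄ = 0 ∧ a₆ = a₃ ∧ a₇ = -a₁ := by
  have hζ₃ : ζ₃ ∉ m := fun hζ₃ ↦ hv (by convert sub_mem hx₁ hζ₃ using 1; abel)
  have ha₄ := h.coeff_ξ'₃₂_eq_zero_of_mem hx₃ hζ₃ hy
  subst ha₄
  set y := a₁ • ξ₃₁ + a₂ • ξ₃₂ + a₃ • ξ'₃₁ + (0 : ℝ) • ξ'₃₂ + a₅ • ζ₃ + a₆ • ξ₂₁ + a₇ • ξ'₂₁ +
    a₈ • ζ₂ with hy_def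
  set p := a₆ - a₃
  set q := a₁ + a₇
  have hcomb : (p ^ 2 + q ^ 2) • (ξ'₃₁ + ξ₂₁) =
      q • (⁅ξ'₃₁ + ζ₃ + ξ₂₁, y⁆ + q • (ξ'₃₁ + ζ₃ + ξ₂₁) - a₇ • (ζ₃ + ζ₂)) -
      p • (⁅-ξ₃₁ + ξ'₂₁, y⁆ - p • (ξ'₃₁ + ζ₃ + ξ₂₁) + a₆ • (ζ₃ + ζ₂)) := by
    rw [hy_def, h.lie_x₁, h.lie_x₂]
    module
  have hmem : (p ^ 2 + q ^ 2) • (ξ'₃₁ + ξ₂₁) ∈ m := by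
    rw [hcomb]
    exact sub_mem
      (m.smul_mem _ (sub_mem (add_mem (m.lie_mem hx₁ hy) (m.smul_mem _ hx₁)) (m.smul_mem _ hx₃)))
      (m.smul_mem _ (add_mem (sub_mem (m.lie_mem hx₂ hy) (m.smul_mem _ hx₁)) (m.smul_mem _ hx₃)))
  have hpq := eq_zero_of_smul_mem_of_notMem (p := m.toSubmodule) hmem hv
  refine ⟨rfl, ?_, ?_⟩ <;> nlinarith [sq_nonneg p, sq_nonneg q]

theorem le_span (h : NilradicalBrackets ξ₃₁ ξ₃₂ ξ'₃₁ ξ'₃₂ ζ₃ ξ₂₁ ξ'₂₁ ζ₂)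
    {m : LieSubalgebra ℝ g}
    (hm : m.toSubmodule ≤ span ℝ {ξ₃₁, ξ₃₂, ξ'₃₁, ξ'₃₂, ζ₃, ξ₂₁, ξ'₂₁, ζ₂})
    (hx₁ : ξ'₃₁ + ζ₃ + ξ₂₁ ∈ m) (hx₂ : -ξ₃₁ + ξ'₂₁ ∈ m) (hx₃ : ζ₃ + ζ₂ ∈ m)
    (hv : ξ'₃₁ + ξ₂₁ ∉ m) :
    m.toSubmodule ≤ span ℝ (Set.range ![ξ₃₁ - ξ'₂₁, ξ₃₂, ξ'₃₁ + ξ₂₁, ζ₃, ζ₂]) := by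
  intro y hy
  obtain ⟨a₁, a₂, a₃, a₄, a₅, a₆, a₇, a₈, rfl⟩ := exists_eq_of_mem_span_eight (hm hy)
  obtain ⟨rfl, rfl, rfl⟩ := h.coeffs_of_mem hx₁ hx₂ hx₃ hv hy
  refine (mem_span_range_iff_exists_fun ℝ).2 ⟨![a₁, a₂, a₆, a₅, a₈], ?_⟩
  simp only [Fin.sum_univ_five, Matrix.cons_val]
  module

end NilradicalBrackets

theorem statement5_general (g : Type*) [LieRing g] [LieAlgebra ℝ g]
    (α₃ ξ₃₁ ξ₃₂ ξ'₃₁ ξ'₃₂ ζ₃ α₂ ξ₂₁ ξ'₂₁ ζ₂ : g)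
    (hindep : LinearIndependent ℝ ![α₃, ξ₃₁, ξ₃₂, ξ'₃₁, ξ'₃₂, ζ₃, α₂, ξ₂₁, ξ'₂₁, ζ₂])
    -- nonvanishing brackets
    (hb1 : ⁅ξ₃₁, ξ'₃₁⁆ = ζ₃)
    (hb2 : ⁅ξ₃₂, ξ'₃₂⁆ = ζ₃)
    (hb8 : ⁅ξ₂₁, ξ'₂₁⁆ = ζ₂)
    (hb14 : ⁅ξ₂₁, ξ'₃₁⁆ = -ξ₃₂)
    (hb15 : ⁅ξ₂₁, ξ'₃₂⁆ = -ξ₃₁)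
    (hb16 : ⁅ξ'₂₁, ξ₃₁⁆ = ξ₃₂)
    (hb17 : ⁅ξ'₂₁, ξ'₃₂⁆ = -ξ'₃₁)
    (hb18 : ⁅ζ₂, ξ'₃₂⁆ = (2 : ℝ) • ξ₃₂)
    -- vanishing brackets (all remaining pairs of basis vectors)
    (hz5 : ⁅ξ₃₁, ξ₃₂⁆ = (0 : g))
    (hz6 : ⁅ξ₃₁, ξ'₃₂⁆ = (0 : g))
    (hz7 : ⁅ξ₃₁, ζ₃⁆ = (0 : g))
    (hz9 : ⁅ξ₃₁, ξ₂₁⁆ = (0 : g))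
    (hz10 : ⁅ξ₃₁, ζ₂⁆ = (0 : g))
    (hz11 : ⁅ξ₃₂, ξ'₃₁⁆ = (0 : g))
    (hz12 : ⁅ξ₃₂, ζ₃⁆ = (0 : g))
    (hz13 : ⁅ξ₃₂, ξ₂₁⁆ = (0 : g))
    (hz14 : ⁅ξ₃₂, ξ'₂₁⁆ = (0 : g))
    (hz15 : ⁅ξ₃₂, ζ₂⁆ = (0 : g))
    (hz16 : ⁅ξ'₃₁, ξ'₃₂⁆ = (0 : g))
    (hz17 : ⁅ξ'₃₁, ζ₃⁆ = (0 : g))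
    (hz19 : ⁅ξ'₃₁, ξ'₂₁⁆ = (0 : g))
    (hz20 : ⁅ξ'₃₁, ζ₂⁆ = (0 : g))
    (hz21 : ⁅ξ'₃₂, ζ₃⁆ = (0 : g))
    (hz23 : ⁅ζ₃, ξ₂₁⁆ = (0 : g))
    (hz24 : ⁅ζ₃, ξ'₂₁⁆ = (0 : g))
    (hz25 : ⁅ζ₃, ζ₂⁆ = (0 : g))
    (hz26 : ⁅ξ₂₁, ζ₂⁆ = (0 : g))
    (hz27 : ⁅ξ'₂₁, ζ₂⁆ = (0 : g))
    -- the complex structure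
    (j : g →ₗ[ℝ] g)
    (hj3 : j ξ'₃₁ = -ξ₃₁)
    (hj7 : j ξ₂₁ = ξ'₂₁)
    -- the nilradical
    (𝔫 : LieSubalgebra ℝ g)
    (h𝔫 : 𝔫.toSubmodule = Submodule.span ℝ {ξ₃₁, ξ₃₂, ξ'₃₁, ξ'₃₂, ζ₃, ξ₂₁, ξ'₂₁, ζ₂}) :
    ¬ ∃ m : LieSubalgebra ℝ g, m ≤ 𝔫 ∧
        (ξ'₃₁ + ζ₃ + ξ₂₁) ∈ m ∧ (-ξ₃₁ + ξ'₂₁) ∈ m ∧ (ζ₃ + ζ₂) ∈ m ∧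
        m.toSubmodule ⊓ (m.toSubmodule.map j) = ⊥ ∧ Module.finrank ℝ m = 5 := by
  rintro ⟨m, hm𝔫, hx₁, hx₂, hx₃, hreal, hdim⟩
  have h : NilradicalBrackets ξ₃₁ ξ₃₂ ξ'₃₁ ξ'₃₂ ζ₃ ξ₂₁ ξ'₂₁ ζ₂ :=
    ⟨hb1, hb2, hb8, hb14, hb15, hb16, hb17, hb18, hz5, hz6, hz7, hz9, hz10, hz11, hz12, hz13,
      hz14, hz15, hz16, hz17, hz19, hz20, hz21, hz23, hz24, hz25, hz26, hz27⟩
  have hv : ξ'₃₁ + ξ₂₁ ∉ m := by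
    intro hv
    have hjv : j (ξ'₃₁ + ξ₂₁) = -ξ₃₁ + ξ'₂₁ := by rw [map_add, hj3, hj7]
    have hx₂_eq : -ξ₃₁ + ξ'₂₁ = 0 :=
      hjv ▸ apply_eq_zero_of_inf_map_eq_bot hreal hv (hjv ▸ hx₂)
    exact (show (1 : Fin 10) ≠ 8 by decide) (hindep.injective (neg_add_eq_zero.mp hx₂_eq))
  have hle := h.le_span (h𝔫 ▸ (LieSubalgebra.toSubmodule_le_toSubmodule _ _).2 hm𝔫)
    hx₁ hx₂ hx₃ hv
  have hlt := SetLike.lt_iff_le_and_exists.2 ⟨hle, _, subset_span ⟨2, rfl⟩, hv⟩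
  have : FiniteDimensional ℝ (span ℝ (Set.range ![ξ₃₁ - ξ'₂₁, ξ₃₂, ξ'₃₁ + ξ₂₁, ζ₃, ζ₂])) :=
    FiniteDimensional.span_of_finite ℝ (Set.finite_range _)
  have hrank := (finrank_lt_finrank_of_lt hlt).trans_le (finrank_range_le_card (R := ℝ) _)
  simp only [Fintype.card_fin] at hrank
  exact hrank.ne hdim

/-- Let `g` be the 10-dimensional normal `j`-algebra (of a 5-dimensional
bounded homogeneous domain in the Siegel disk `𝕊₃`) with basis
`α₃, ξ₃₁, ξ₃₂, ξ'₃₁, ξ'₃₂, ζ₃, α₂, ξ₂₁, ξ'₂₁, ζ₂`, brackets and complex structure `j`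
as in the paper, and nilradical `𝔫` spanned by `ξ₃₁, ξ₃₂, ξ'₃₁, ξ'₃₂, ζ₃, ξ₂₁, ξ'₂₁, ζ₂`.
Set `x₁ := ξ'₃₁ + ζ₃ + ξ₂₁`, `x₂ := -ξ₃₁ + ξ'₂₁`, `x₃ := ζ₃ + ζ₂`. Then the Heisenberg
subalgebra `𝔫_Γ` they span is not contained in any maximal totally real Lie subalgebra of
`𝔫`: there is no Lie subalgebra `m` of `𝔫` with `x₁, x₂, x₃ ∈ m`, `m ∩ j(m) = {0}`, and
`dim_ℝ m = 5`. -/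
theorem statement5 (g : Type*) [LieRing g] [LieAlgebra ℝ g]
    (α₃ ξ₃₁ ξ₃₂ ξ'₃₁ ξ'₃₂ ζ₃ α₂ ξ₂₁ ξ'₂₁ ζ₂ : g)
    (hindep : LinearIndependent ℝ ![α₃, ξ₃₁, ξ₃₂, ξ'₃₁, ξ'₃₂, ζ₃, α₂, ξ₂₁, ξ'₂₁, ζ₂])
    (hspan : Submodule.span ℝ
      (Set.range ![α₃, ξ₃₁, ξ₃₂, ξ'₃₁, ξ'₃₂, ζ₃, α₂, ξ₂₁, ξ'₂₁, ζ₂]) = ⊤)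
    -- nonvanishing brackets
    (hb1 : ⁅ξ₃₁, ξ'₃₁⁆ = ζ₃)
    (hb2 : ⁅ξ₃₂, ξ'₃₂⁆ = ζ₃)
    (hb3 : ⁅α₃, ξ₃₁⁆ = -ξ₃₁)
    (hb4 : ⁅α₃, ξ₃₂⁆ = -ξ₃₂)
    (hb5 : ⁅α₃, ξ'₃₁⁆ = -ξ'₃₁)
    (hb6 : ⁅α₃, ξ'₃₂⁆ = -ξ'₃₂)
    (hb7 : ⁅α₃, ζ₃⁆ = (-2 : ℝ) • ζ₃)
    (hb8 : ⁅ξ₂₁, ξ'₂₁⁆ = ζ₂)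
    (hb9 : ⁅α₂, ξ₂₁⁆ = -ξ₂₁)
    (hb10 : ⁅α₂, ξ'₂₁⁆ = -ξ'₂₁)
    (hb11 : ⁅α₂, ζ₂⁆ = (-2 : ℝ) • ζ₂)
    (hb12 : ⁅α₂, ξ₃₂⁆ = ξ₃₂)
    (hb13 : ⁅α₂, ξ'₃₂⁆ = -ξ'₃₂)
    (hb14 : ⁅ξ₂₁, ξ'₃₁⁆ = -ξ₃₂)
    (hb15 : ⁅ξ₂₁, ξ'₃₂⁆ = -ξ₃₁)
    (hb16 : ⁅ξ'₂₁, ξ₃₁⁆ = ξ₃₂)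
    (hb17 : ⁅ξ'₂₁, ξ'₃₂⁆ = -ξ'₃₁)
    (hb18 : ⁅ζ₂, ξ'₃₂⁆ = (2 : ℝ) • ξ₃₂)
    -- vanishing brackets (all remaining pairs of basis vectors)
    (hz1 : ⁅α₃, α₂⁆ = (0 : g))
    (hz2 : ⁅α₃, ξ₂₁⁆ = (0 : g))
    (hz3 : ⁅α₃, ξ'₂₁⁆ = (0 : g))
    (hz4 : ⁅α₃, ζ₂⁆ = (0 : g))
    (hz5 : ⁅ξ₃₁, ξ₃₂⁆ = (0 : g))
    (hz6 : ⁅ξ₃₁, ξ'₃₂⁆ = (0 : g))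
    (hz7 : ⁅ξ₃₁, ζ₃⁆ = (0 : g))
    (hz8 : ⁅ξ₃₁, α₂⁆ = (0 : g))
    (hz9 : ⁅ξ₃₁, ξ₂₁⁆ = (0 : g))
    (hz10 : ⁅ξ₃₁, ζ₂⁆ = (0 : g))
    (hz11 : ⁅ξ₃₂, ξ'₃₁⁆ = (0 : g))
    (hz12 : ⁅ξ₃₂, ζ₃⁆ = (0 : g))
    (hz13 : ⁅ξ₃₂, ξ₂₁⁆ = (0 : g))
    (hz14 : ⁅ξ₃₂, ξ'₂₁⁆ = (0 : g))
    (hz15 : ⁅ξ₃₂, ζ₂⁆ = (0 : g))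
    (hz16 : ⁅ξ'₃₁, ξ'₃₂⁆ = (0 : g))
    (hz17 : ⁅ξ'₃₁, ζ₃⁆ = (0 : g))
    (hz18 : ⁅ξ'₃₁, α₂⁆ = (0 : g))
    (hz19 : ⁅ξ'₃₁, ξ'₂₁⁆ = (0 : g))
    (hz20 : ⁅ξ'₃₁, ζ₂⁆ = (0 : g))
    (hz21 : ⁅ξ'₃₂, ζ₃⁆ = (0 : g))
    (hz22 : ⁅ζ₃, α₂⁆ = (0 : g))
    (hz23 : ⁅ζ₃, ξ₂₁⁆ = (0 : g))
    (hz24 : ⁅ζ₃, ξ'₂₁⁆ = (0 : g))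
    (hz25 : ⁅ζ₃, ζ₂⁆ = (0 : g))
    (hz26 : ⁅ξ₂₁, ζ₂⁆ = (0 : g))
    (hz27 : ⁅ξ'₂₁, ζ₂⁆ = (0 : g))
    -- the complex structure
    (j : g →ₗ[ℝ] g)
    (hj1 : j ξ₃₁ = ξ'₃₁) (hj2 : j ξ₃₂ = ξ'₃₂)
    (hj3 : j ξ'₃₁ = -ξ₃₁) (hj4 : j ξ'₃₂ = -ξ₃₂)
    (hj5 : j ζ₃ = α₃) (hj6 : j α₃ = -ζ₃)
    (hj7 : j ξ₂₁ = ξ'₂₁) (hj8 : j ξ'₂₁ = -ξ₂₁)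
    (hj9 : j ζ₂ = α₂) (hj10 : j α₂ = -ζ₂)
    -- the nilradical
    (𝔫 : LieSubalgebra ℝ g)
    (h𝔫 : 𝔫.toSubmodule = Submodule.span ℝ {ξ₃₁, ξ₃₂, ξ'₃₁, ξ'₃₂, ζ₃, ξ₂₁, ξ'₂₁, ζ₂}) :
    ¬ ∃ m : LieSubalgebra ℝ g, m ≤ 𝔫 ∧
        (ξ'₃₁ + ζ₃ + ξ₂₁) ∈ m ∧ (-ξ₃₁ + ξ'₂₁) ∈ m ∧ (ζ₃ + ζ₂) ∈ m ∧
        m.toSubmodule ⊓ (m.toSubmodule.map j) = ⊥ ∧ Module.finrank ℝ m = 5 :=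
  statement5_general g α₃ ξ₃₁ ξ₃₂ ξ'₃₁ ξ'₃₂ ζ₃ α₂ ξ₂₁ ξ'₂₁ ζ₂ hindep hb1 hb2 hb8 hb14 hb15 hb16 hb17
    hb18 hz5 hz6 hz7 hz9 hz10 hz11 hz12 hz13 hz14 hz15 hz16 hz17 hz19 hz20 hz21 hz23 hz24 hz25 hz26
    hz27 j hj3 hj7 𝔫 h𝔫
end

section
/- Let f, g, φ, ψ : ℂ → ℂ be entire functions such that φ(w)f(w) + ψ(w)g(w) = 1 for all w ∈ ℂ. Then there exists a bijection Φ : ℂ³ → ℂ³ such that both Φ and its inverse are holomorphic, and Φ(z₁, z₂ + t·f(z₁), z₃ + t·g(z₁)) = Φ(z₁, z₂, z₃) + (0, t, 0) for all t ∈ ℂ and all (z₁, z₂, z₃) ∈ ℂ³; that is, the holomorphic ℂ-action t·(z₁, z₂, z₃) = (z₁, z₂ + t·f(z₁), z₃ + t·g(z₁)) on ℂ³ is conjugate by a biholomorphism of ℂ³ to the translation action t·z = z + (0, t, 0). -/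
/-!
Over each `z₁` the action translates `(z₂, z₃)` along the vector `(f z₁, g z₁)`. The matrix
`[[φ, ψ], [g, -f]]` has determinant `-(φ f + ψ g) = -1` and sends `(f, g)` to `(1, 0)`, so the
fibrewise linear map it defines straightens the action; its inverse `[[f, ψ], [g, -φ]]` is the
same construction with the roles of `f` and `φ` exchanged.
-/

variable {X R : Type*} [CommRing R]

def bezoutMap (f g φ ψ : X → R) (z : X × R × R) : X × R × R :=
  (z.1, φ z.1 * z.2.1 + ψ z.1 * z.2.2, g z.1 * z.2.1 - f z.1 * z.2.2)

theorem bezoutMap_bezoutMap {f g φ ψ : X → R} (h : ∀ x, φ x * f x + ψ x * g x = 1)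
    (z : X × R × R) : bezoutMap φ g f ψ (bezoutMap f g φ ψ z) = z := by
  obtain ⟨x, u, v⟩ := z
  refine Prod.ext rfl (Prod.ext ?_ ?_)
  · simp only [bezoutMap]
    linear_combination u * h x
  · simp only [bezoutMap]
    linear_combination v * h x

def bezoutEquiv {f g φ ψ : X → R} (h : ∀ x, φ x * f x + ψ x * g x = 1) :
    (X × R × R) ≃ (X × R × R) where
  toFun := bezoutMap f g φ ψ
  invFun := bezoutMap φ g f ψ
  left_inv := bezoutMap_bezoutMap h
  right_inv := bezoutMap_bezoutMap fun x => by rw [mul_comm, h]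

theorem bezoutMap_add_mul [AddZeroClass X] {f g φ ψ : X → R} (h : ∀ x, φ x * f x + ψ x * g x = 1) (t : R)
    (z : X × R × R) :
    bezoutMap f g φ ψ (z.1, z.2.1 + t * f z.1, z.2.2 + t * g z.1) =
      bezoutMap f g φ ψ z + (0, t, 0) := by
  refine Prod.ext (add_zero _).symm (Prod.ext ?_ ?_)
  · simp only [bezoutMap, Prod.snd_add, Prod.fst_add]
    linear_combination t * h z.1
  · simp only [bezoutMap, Prod.snd_add]
    ring

theorem Differentiable.bezoutMap {𝕜 E : Type*} [NontriviallyNormedField 𝕜] [NormedAddCommGroup E]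
    [NormedSpace 𝕜 E] {f g φ ψ : E → 𝕜} (hf : Differentiable 𝕜 f) (hg : Differentiable 𝕜 g)
    (hφ : Differentiable 𝕜 φ) (hψ : Differentiable 𝕜 ψ) :
    Differentiable 𝕜 (_root_.bezoutMap f g φ ψ) := by
  unfold _root_.bezoutMap
  fun_prop

/-- Let `f, g, φ, ψ : ℂ → ℂ` be entire functions with
`φ f + ψ g = 1`. Then the holomorphic `ℂ`-action
`t • (z₁, z₂, z₃) = (z₁, z₂ + t f(z₁), z₃ + t g(z₁))` on `ℂ³` is conjugate by a
biholomorphism `Φ` of `ℂ³` to the translation action `t • z = z + (0, t, 0)`. -/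
theorem statement10 (f g φ ψ : ℂ → ℂ)
    (hf : Differentiable ℂ f) (hg : Differentiable ℂ g)
    (hφ : Differentiable ℂ φ) (hψ : Differentiable ℂ ψ)
    (h1 : ∀ w : ℂ, φ w * f w + ψ w * g w = 1) :
    ∃ Φ : (ℂ × ℂ × ℂ) ≃ (ℂ × ℂ × ℂ),
      Differentiable ℂ Φ ∧ Differentiable ℂ Φ.symm ∧
      ∀ (t : ℂ) (z : ℂ × ℂ × ℂ),
        Φ (z.1, z.2.1 + t * f z.1, z.2.2 + t * g z.1) = Φ z + (0, t, 0) :=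
  ⟨bezoutEquiv h1, hf.bezoutMap hg hφ hψ, hφ.bezoutMap hg hf hψ, bezoutMap_add_mul h1⟩
end

section
/- Define Φ : ℂ⁵ → ℂ⁵ by Φ(z₁, z₂, z₃, z₄, z₅) = (z₂, z₁, z₃ − z₁z₂, z₄ + 2z₂z₃ − 2z₁z₅ − 2z₂, z₂² − 2z₅). Then Φ is a bijection whose inverse is also a polynomial map, and for every a ∈ ℂ and every (z₁, …, z₅) ∈ ℂ⁵ one has Φ(z₁, z₂ + a, z₃ + a·z₁, z₄ − 2a·z₃ − a²·z₁ + 2a, z₅ + a·z₂ + a²/2) = Φ(z₁, z₂, z₃, z₄, z₅) + (a, 0, 0, 0, 0). -/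
/-!
The last four coordinates of `Φ` — `z₁`, `z₃ − z₁z₂`, `z₄ + 2z₂z₃ − 2z₁z₅ − 2z₂`, `z₂² − 2z₅` —
are invariants of the action `S_a`, while its first coordinate `z₂` is moved by `a`; this is the
conjugation identity. The map `Φ` is triangular: from `w = Φ z` one reads off `z₁ = w₂`, `z₂ = w₁`,
then `z₃ = w₃ + w₁w₂`, `z₅ = (w₁² − w₅)/2`, and finally `z₄`, each a polynomial in `w`.
-/

/-- The biregular map `Φ : ℂ⁵ → ℂ⁵`,
`Φ(z₁,…,z₅) = (z₂, z₁, z₃ − z₁z₂, z₄ + 2z₂z₃ − 2z₁z₅ − 2z₂, z₂² − 2z₅)`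
(coordinates are `z 0, …, z 4`). -/
noncomputable def statement11Phi : (Fin 5 → ℂ) → (Fin 5 → ℂ) := fun z =>
  ![z 1, z 0, z 2 - z 0 * z 1, z 3 + 2 * z 1 * z 2 - 2 * z 0 * z 4 - 2 * z 1,
    (z 1) ^ 2 - 2 * z 4]

open MvPolynomial

noncomputable def statement11PsiPoly : Fin 5 → MvPolynomial (Fin 5) ℂ :=
  ![X 1, X 0, X 2 + X 0 * X 1,
    X 3 - 2 * X 0 * X 2 - X 0 ^ 2 * X 1 - X 1 * X 4 + 2 * X 0,
    C (1 / 2) * (X 0 ^ 2 - X 4)]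

noncomputable def statement11Psi (w : Fin 5 → ℂ) : Fin 5 → ℂ :=
  fun i => eval w (statement11PsiPoly i)

lemma statement11Psi_eq (w : Fin 5 → ℂ) :
    statement11Psi w =
      ![w 1, w 0, w 2 + w 0 * w 1,
        w 3 - 2 * w 0 * w 2 - w 0 ^ 2 * w 1 - w 1 * w 4 + 2 * w 0,
        (w 0 ^ 2 - w 4) / 2] := by
  funext i
  fin_cases i <;> simp [statement11Psi, statement11PsiPoly, div_eq_inv_mul]

lemma statement11Psi_leftInverse : Function.LeftInverse statement11Psi statement11Phi := by
  intro z
  funext i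
  fin_cases i <;> simp [statement11Psi_eq, statement11Phi] <;> ring

lemma statement11Psi_rightInverse : Function.RightInverse statement11Psi statement11Phi := by
  intro w
  funext i
  fin_cases i <;> simp [statement11Psi_eq, statement11Phi] <;> ring

lemma statement11Phi_shift (a : ℂ) (z : Fin 5 → ℂ) :
    statement11Phi
        ![z 0, z 1 + a, z 2 + a * z 0, z 3 - 2 * a * z 2 - a ^ 2 * z 0 + 2 * a,
          z 4 + a * z 1 + a ^ 2 / 2]
      = statement11Phi z + ![a, 0, 0, 0, 0] := by
  funext i
  fin_cases i <;> simp [statement11Phi] <;> ring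

/-- The map `Φ` above is a bijection whose inverse is also a polynomial
map, and it conjugates the one-parameter group
`S_a(z) = (z₁, z₂ + a, z₃ + a z₁, z₄ − 2a z₃ − a² z₁ + 2a, z₅ + a z₂ + a²/2)` to the
translation action in the first coordinate: `Φ(S_a(z)) = Φ(z) + (a, 0, 0, 0, 0)`. -/
theorem statement11 :
    (Function.Bijective statement11Phi ∧
      ∃ Ψ : (Fin 5 → ℂ) → (Fin 5 → ℂ),
        (∀ i : Fin 5, ∃ p : MvPolynomial (Fin 5) ℂ,
          ∀ z : Fin 5 → ℂ, Ψ z i = MvPolynomial.eval z p) ∧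
        Function.LeftInverse Ψ statement11Phi ∧
        Function.RightInverse Ψ statement11Phi) ∧
    ∀ (a : ℂ) (z : Fin 5 → ℂ),
      statement11Phi
        ![z 0, z 1 + a, z 2 + a * z 0, z 3 - 2 * a * z 2 - a ^ 2 * z 0 + 2 * a,
          z 4 + a * z 1 + a ^ 2 / 2]
        = statement11Phi z + ![a, 0, 0, 0, 0] :=
  ⟨⟨⟨statement11Psi_leftInverse.injective, statement11Psi_rightInverse.surjective⟩,
    statement11Psi, fun i => ⟨statement11PsiPoly i, fun _ => rfl⟩,
    statement11Psi_leftInverse, statement11Psi_rightInverse⟩, statement11Phi_shift⟩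
end

section
/- Let a, b, c ∈ ℂ and let z₁₁, z₁₂, z₁₃, z₂₂, z₂₃, z₃₃ ∈ ℂ. If b·z₁₁ + a = 0, a·z₁₁ − b = 0, 2b·z₁₂ + b²·z₁₁ + a·b − 2c = 0, a·z₁₂ + b·z₁₃ + a·b·z₁₁ + (a² − b²)/2 = 0, and 2a·z₁₃ + a²·z₁₁ − a·b − 2(a + c) = 0, then a = 0, b = 0, and c = 0. Equivalently: the group N_Γ^ℂ of affine transformations of the space Sym(3, ℂ) of complex symmetric 3×3 matrices given by (a,b,c) · (z_{kl}) = the symmetric matrix with entries z₁₁, z₁₂ + b·z₁₁ + a, z₁₃ + a·z₁₁ − b, z₂₂ + 2b·z₁₂ + b²·z₁₁ + ab − 2c, z₂₃ + a·z₁₂ + b·z₁₃ + ab·z₁₁ + (a² − b²)/2, z₃₃ + 2a·z₁₃ + a²·z₁₁ − ab − 2(a + c), acts freely on Sym(3, ℂ). -/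
theorem statement12_general (a b c : ℂ) (z₁₁ z₁₂ z₁₃ : ℂ)
    (h1 : b * z₁₁ + a = 0)
    (h2 : a * z₁₁ - b = 0)
    (h3 : 2 * b * z₁₂ + b ^ 2 * z₁₁ + a * b - 2 * c = 0)
    (h4 : a * z₁₂ + b * z₁₃ + a * b * z₁₁ + (a ^ 2 - b ^ 2) / 2 = 0)
    (h5 : 2 * a * z₁₃ + a ^ 2 * z₁₁ - a * b - 2 * (a + c) = 0) :
    a = 0 ∧ b = 0 ∧ c = 0 := by
  have hsq : a ^ 2 + b ^ 2 = 0 := by linear_combination a * h1 - b * h2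
  have hc : b * z₁₂ = c := by linear_combination h3 / 2 - b / 2 * h1
  have hac : a * z₁₃ = a + c := by linear_combination h5 / 2 - a / 2 * h2
  have hcross : a * z₁₂ + b * z₁₃ = 0 := by linear_combination h4 - b * h2 - hsq / 2
  -- a² = a (a z₁₃) − a (b z₁₂) = a² z₁₃ + b² z₁₃ = (a² + b²) z₁₃
  have ha : a = 0 := pow_eq_zero_iff two_ne_zero |>.mp <| by
    linear_combination a * hc - a * hac - b * hcross + z₁₃ * hsq
  have hb : b = 0 := pow_eq_zero_iff two_ne_zero |>.mp <| by
    linear_combination hsq - a * ha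
  exact ⟨ha, hb, by rw [← hc, hb, zero_mul]⟩

/-- For all `a, b, c ∈ ℂ` and all entries `z₁₁, z₁₂, z₁₃, z₂₂, z₂₃, z₃₃`
of a complex symmetric 3×3 matrix, if
`b z₁₁ + a = 0`, `a z₁₁ − b = 0`, `2b z₁₂ + b² z₁₁ + ab − 2c = 0`,
`a z₁₂ + b z₁₃ + ab z₁₁ + (a² − b²)/2 = 0`, and `2a z₁₃ + a² z₁₁ − ab − 2(a + c) = 0`,
then `a = b = c = 0`. Equivalently, the complexified unipotent group `N_Γ^ℂ` acts freely on
`Sym(3, ℂ)` by the affine transformations described in the paper. -/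
theorem statement12 (a b c : ℂ) (z₁₁ z₁₂ z₁₃ z₂₂ z₂₃ z₃₃ : ℂ)
    (h1 : b * z₁₁ + a = 0)
    (h2 : a * z₁₁ - b = 0)
    (h3 : 2 * b * z₁₂ + b ^ 2 * z₁₁ + a * b - 2 * c = 0)
    (h4 : a * z₁₂ + b * z₁₃ + a * b * z₁₁ + (a ^ 2 - b ^ 2) / 2 = 0)
    (h5 : 2 * a * z₁₃ + a ^ 2 * z₁₁ - a * b - 2 * (a + c) = 0) :
    a = 0 ∧ b = 0 ∧ c = 0 :=
  statement12_general a b c z₁₁ z₁₂ z₁₃ h1 h2 h3 h4 h5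
end

section
/- For every (w₁, w₂) ∈ ℂ², the three vectors v₁ = (2i·w₁, 1, 0), v₂ = (2(w₁ + w₂), i, i), v₃ = (1, 0, 0) in ℂ³ are linearly independent over ℂ; consequently their real span V ⊂ ℂ³ satisfies dim_ℝ V = 3 and V ∩ i·V = {0}, i.e. V is a maximal totally real subspace of ℂ³. -/
/-!
The three vectors have determinant `i`, so they are linearly independent over `ℂ`. Since `1, i`
is an `ℝ`-basis of `ℂ`, `ℂ`-independence of a family `v` makes the real family `(v, i • v)`
independent; this gives both `dim_ℝ V = 3` and `V ∩ i • V = 0`.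
-/

open Complex Submodule Set

theorem LinearIndependent.disjoint_span_real_map_I_smul {ι E : Type*} [AddCommGroup E]
    [Module ℂ E] [Module ℝ E] [IsScalarTower ℝ ℂ E] {v : ι → E}
    (hv : LinearIndependent ℂ v) :
    Disjoint (span ℝ (range v))
      ((span ℝ (range v)).map ((LinearMap.lsmul ℂ E I).restrictScalars ℝ)) := by
  have hsmul := linearIndependent_smul basisOneI.linearIndependent hv
  convert hsmul.disjoint_span_image (s := {0} ×ˢ univ) (t := {1} ×ˢ univ) (by simp) using 2
  · ext; simp
  · rw [map_span]; congr 1; ext; simp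

def orbitTangentFrame (w₁ w₂ : ℂ) : Matrix (Fin 3) (Fin 3) ℂ :=
  !![2 * I * w₁, 1, 0; 2 * (w₁ + w₂), I, I; 1, 0, 0]

theorem det_orbitTangentFrame (w₁ w₂ : ℂ) : (orbitTangentFrame w₁ w₂).det = I := by
  simp [orbitTangentFrame, Matrix.det_fin_three]

theorem linearIndependent_orbitTangentFrame (w₁ w₂ : ℂ) :
    LinearIndependent ℂ (fun i ↦ orbitTangentFrame w₁ w₂ i) :=
  Matrix.linearIndependent_rows_of_det_ne_zero <| by
    rw [det_orbitTangentFrame]; exact I_ne_zero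

/-- For every `(w₁, w₂) ∈ ℂ²`, the vectors `v₁ = (2i w₁, 1, 0)`,
`v₂ = (2(w₁ + w₂), i, i)`, `v₃ = (1, 0, 0)` in `ℂ³` are linearly independent over `ℂ`;
consequently their real span `V` satisfies `dim_ℝ V = 3` and `V ∩ i·V = {0}`, i.e. `V` is
a maximal totally real subspace of `ℂ³`. -/
theorem statement13 (w₁ w₂ : ℂ) :
    LinearIndependent ℂ
      ![![2 * I * w₁, 1, 0], ![2 * (w₁ + w₂), I, I], ![(1 : ℂ), 0, 0]] ∧
    Module.finrank ℝ
      (Submodule.span ℝ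
        (Set.range ![![2 * I * w₁, 1, 0], ![2 * (w₁ + w₂), I, I], ![(1 : ℂ), 0, 0]])) = 3 ∧
    Submodule.span ℝ
        (Set.range ![![2 * I * w₁, 1, 0], ![2 * (w₁ + w₂), I, I], ![(1 : ℂ), 0, 0]]) ⊓
      (Submodule.span ℝ
        (Set.range ![![2 * I * w₁, 1, 0], ![2 * (w₁ + w₂), I, I], ![(1 : ℂ), 0, 0]])).map
        ((LinearMap.lsmul ℂ (Fin 3 → ℂ) I).restrictScalars ℝ) = ⊥ := by
  have hv : LinearIndependent ℂ
      ![![2 * I * w₁, 1, 0], ![2 * (w₁ + w₂), I, I], ![(1 : ℂ), 0, 0]] :=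
    linearIndependent_orbitTangentFrame w₁ w₂
  refine ⟨hv, ?_, hv.disjoint_span_real_map_I_smul.eq_bot⟩
  rw [finrank_span_eq_card (hv.restrict_scalars' ℝ), Fintype.card_fin]
end
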